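/- arXiv:2404.18671 — 10 statements merged into one kernel-verified Lean document; each statement's English description precedes it below -/
import Mathlib

section
/- Let n ≥ 2 and let G₁,…,G_{n²−1} be n×n complex Hermitian matrices with Tr(G_i) = 0 for all i and Tr(G_i G_j) = 2δ_{ij} for all i, j. Then ∑_{k=1}^{n²−1} G_k² = (2(n²−1)/n)·I. -/
open Matrix Finset

theorem stmt_1 (n : ℕ) (hn : 2 ≤ n)
    (G : Fin (n ^ 2 - 1) → Matrix (Fin n) (Fin n) ℂ)
    (hherm : ∀ i, (G i).IsHermitian)
    (htr : ∀ i, (G i).trace = 0)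
    (horth : ∀ i j, (G i * G j).trace = if i = j then 2 else 0) :
    ∑ k, (G k) ^ 2
      = ((2 * ((n : ℂ) ^ 2 - 1)) / (n : ℂ)) • (1 : Matrix (Fin n) (Fin n) ℂ) := by
  have hn0 : (n : ℂ) ≠ 0 := Nat.cast_ne_zero.mpr (by omega)
  set F : Fin (n ^ 2 - 1) ⊕ Unit → Matrix (Fin n) (Fin n) ℂ :=
    Sum.elim G (fun _ => 1) with hF
  have htrone : (1 : Matrix (Fin n) (Fin n) ℂ).trace = (n : ℂ) := by
    simp [Matrix.trace_one]
  -- linear independence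
  have hli : LinearIndependent ℂ F := by
    rw [Fintype.linearIndependent_iff]
    intro g hg
    have key : ∀ A : Matrix (Fin n) (Fin n) ℂ, ∑ i, g i * (A * F i).trace = 0 := by
      intro A
      have h1 : (A * ∑ i, g i • F i).trace = 0 := by rw [hg, Matrix.mul_zero, Matrix.trace_zero]
      rw [Matrix.mul_sum] at h1
      simp only [Matrix.mul_smul, Matrix.trace_sum, Matrix.trace_smul, smul_eq_mul] at h1
      exact h1
    have hinl : ∀ j, g (Sum.inl j) = 0 := by
      intro j
      have h2 := key (G j)
      rw [Fintype.sum_sum_type] at h2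
      simp only [hF, Sum.elim_inl, Sum.elim_inr, horth, Matrix.mul_one, htr,
        mul_zero, Finset.sum_const_zero, add_zero, mul_ite, mul_one] at h2
      rw [Finset.sum_ite_eq Finset.univ j (fun k => g (Sum.inl k) * 2)] at h2
      simp only [Finset.mem_univ, if_true] at h2
      rcases mul_eq_zero.mp h2 with h2 | h2
      · exact h2
      · exact absurd h2 two_ne_zero
    have hinr : g (Sum.inr ()) = 0 := by
      have h2 := key 1
      rw [Fintype.sum_sum_type] at h2
      simp only [hF, Sum.elim_inl, Sum.elim_inr, Matrix.one_mul, htr, mul_zero,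
        Finset.sum_const_zero, zero_add, htrone, Finset.univ_unique, Finset.sum_singleton] at h2
      exact (mul_eq_zero.mp h2).resolve_right hn0
    rintro (j | ⟨⟩)
    · exact hinl j
    · exact hinr
  -- dimension count
  have hn2 : n ^ 2 - 1 + 1 = n * n := by
    have h1 : 1 ≤ n ^ 2 := Nat.one_le_pow _ _ (by omega)
    have : n ^ 2 = n * n := sq n
    omega
  have hcard : Fintype.card (Fin (n ^ 2 - 1) ⊕ Unit)
      = Module.finrank ℂ (Matrix (Fin n) (Fin n) ℂ) := by
    rw [Module.finrank_matrix]
    simp [hn2]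
  have hspan : Submodule.span ℂ (Set.range F) = ⊤ := by
    have h := (basisOfLinearIndependentOfCardEqFinrank hli hcard).span_eq
    rwa [coe_basisOfLinearIndependentOfCardEqFinrank] at h
  -- the reconstruction map
  let T : Matrix (Fin n) (Fin n) ℂ →ₗ[ℂ] Matrix (Fin n) (Fin n) ℂ :=
    { toFun := fun A => (A.trace / n) • (1 : Matrix (Fin n) (Fin n) ℂ)
        + ∑ k, ((G k * A).trace / 2) • G k
      map_add' := by
        intro A B
        simp only [Matrix.mul_add, Matrix.trace_add, add_div, add_smul,
          Finset.sum_add_distrib]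
        abel
      map_smul' := by
        intro c A
        simp only [Matrix.trace_smul, smul_eq_mul, RingHom.id_apply, Matrix.mul_smul,
          mul_div_assoc, smul_smul, Finset.smul_sum, smul_add] }
  have hTid : T = LinearMap.id := by
    apply LinearMap.ext_on hspan
    rintro _ ⟨(j | ⟨⟩), rfl⟩
    · show ((G j).trace / (n:ℂ)) • (1 : Matrix (Fin n) (Fin n) ℂ)
        + ∑ k, ((G k * G j).trace / 2) • G k = G j
      simp only [htr, zero_div, zero_smul, zero_add, horth]
      have hc : ∀ k ∈ Finset.univ, ((if k = j then (2:ℂ) else 0) / 2) • G k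
          = if k = j then G k else 0 := by
        intro k _
        split <;> simp
      rw [Finset.sum_congr rfl hc, Finset.sum_ite_eq' Finset.univ j]
      simp
    · show ((1 : Matrix (Fin n) (Fin n) ℂ).trace / (n:ℂ)) • (1 : Matrix (Fin n) (Fin n) ℂ)
        + ∑ k, ((G k * (1 : Matrix (Fin n) (Fin n) ℂ)).trace / 2) • G k = 1
      simp [htrone, div_self hn0, Matrix.mul_one, htr]
  have hT : ∀ A : Matrix (Fin n) (Fin n) ℂ,
      (A.trace / n) • (1 : Matrix (Fin n) (Fin n) ℂ)
        + ∑ k, ((G k * A).trace / 2) • G k = A := by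
    intro A
    exact LinearMap.congr_fun hTid A
  -- key completeness relation at entries
  have hkey : ∀ b c d : Fin n, ∑ k, G k c b * G k b d
      = 2 * (if c = d then 1 else 0)
        - (2 / n) * ((if b = c then (1:ℂ) else 0) * (if b = d then 1 else 0)) := by
    intro b c d
    have hE := hT (Matrix.single b c (1 : ℂ))
    have htrE : (Matrix.single b c (1 : ℂ)).trace = if b = c then 1 else 0 := by
      simp only [Matrix.trace, Matrix.diag, Matrix.single, Matrix.of_apply]
      rw [Finset.sum_congr rfl (fun i _ => by
        rw [show (if b = i ∧ c = i then (1:ℂ) else 0)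
            = if i = b then (if b = c then 1 else 0) else 0 by
          by_cases h1 : i = b <;> by_cases h2 : b = c <;> simp_all <;> omega])]
      rw [Finset.sum_ite_eq' Finset.univ b]
      simp
    have htrGE : ∀ k, (G k * Matrix.single b c (1 : ℂ)).trace = G k c b := by
      intro k
      simp only [Matrix.trace, Matrix.diag, Matrix.mul_apply, Matrix.single,
        Matrix.of_apply, mul_ite, mul_one, mul_zero]
      rw [Finset.sum_comm]
      rw [Finset.sum_congr rfl (fun i _ => by
        rw [show (∑ j, if b = i ∧ c = j then G k j i else 0)
            = if i = b then G k c b else 0 by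
          by_cases h1 : i = b
          · subst h1
            simp
          · simp [h1, fun j => show ¬(b = i ∧ c = j) from fun h => h1 h.1.symm]])]
      rw [Finset.sum_ite_eq' Finset.univ b]
      simp
    rw [htrE] at hE
    have hE' := congrFun (congrFun hE b) d
    have hstd : Matrix.single b c (1:ℂ) b d = if c = d then 1 else 0 := by
      simp [Matrix.single]
    simp only [Matrix.add_apply, Matrix.smul_apply, Matrix.one_apply, smul_eq_mul,
      Matrix.sum_apply, htrGE, hstd] at hE'
    have hsum : ∀ k ∈ Finset.univ, G k c b / 2 * G k b d
        = (G k c b * G k b d) / 2 := by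
      intro k _
      ring
    rw [Finset.sum_congr rfl hsum, ← Finset.sum_div] at hE'
    linear_combination (norm := ring_nf) 2 * hE'
  -- final computation
  ext c d
  have hL : (∑ k, (G k) ^ 2) c d = ∑ b, ∑ k, G k c b * G k b d := by
    rw [Matrix.sum_apply]
    rw [Finset.sum_comm]
    apply Finset.sum_congr rfl
    intro k _
    rw [sq, Matrix.mul_apply]
  rw [hL]
  simp only [hkey]
  rw [Finset.sum_sub_distrib]
  simp only [Finset.sum_const, Finset.card_univ, Fintype.card_fin, nsmul_eq_mul]
  have h2 : ∑ b, (2 / (n:ℂ)) * ((if b = c then (1:ℂ) else 0) * (if b = d then 1 else 0))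
      = (2 / n) * (if c = d then 1 else 0) := by
    rw [← Finset.mul_sum]
    congr 1
    rw [Finset.sum_congr rfl (fun b _ => by
      rw [show ((if b = c then (1:ℂ) else 0) * (if b = d then 1 else 0))
          = if b = c then (if c = d then 1 else 0) else 0 by
        by_cases h1 : b = c <;> by_cases h3 : b = d <;> simp_all])]
    rw [Finset.sum_ite_eq' Finset.univ c]
    simp
  rw [h2]
  simp only [Matrix.smul_apply, Matrix.one_apply, smul_eq_mul]
  split
  · field_simp
  · simp
end

section
/- Let n ≥ 3 be an odd integer and let G₁,…,G_{n²−1} be n×n complex Hermitian matrices with Tr(G_i) = 0 for all i and Tr(G_i G_j) = 2δ_{ij} for all i, j. For each k define the (n²−1)×(n²−1) real symmetric matrix D_k by (D_k)_{ij} = (1/(n−2))·√(n(n−1)/2)·d_{ijk}, where d_{ijk} = (1/4)·Re Tr((G_iG_j + G_jG_i)G_k). Then the family {D_k : 1 ≤ k ≤ n²−1} is linearly independent over ℝ: if ∑_{k=1}^{n²−1} α_k D_k = 0 with α_k ∈ ℝ, then α_k = 0 for all k. -/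
lemma key_zero (n : ℕ) (hn : 3 ≤ n)
    (G : Fin (n ^ 2 - 1) → Matrix (Fin n) (Fin n) ℂ)
    (htr : ∀ i, (G i).trace = 0)
    (horth : ∀ i j, (G i * G j).trace = if i = j then 2 else 0)
    (X : Matrix (Fin n) (Fin n) ℂ)
    (hX0 : X.trace = 0) (hXj : ∀ j, (X * G j).trace = 0) : X = 0 := by
  have hm1 : n ^ 2 - 1 + 1 = n ^ 2 := by
    have : 0 < n ^ 2 := by positivity
    omega
  set F : Fin (n ^ 2 - 1 + 1) → Matrix (Fin n) (Fin n) ℂ := Fin.cons 1 G with hF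
  -- trace computations for a general combination
  have key : ∀ (g : Fin (n ^ 2 - 1 + 1) → ℂ) (Y : Matrix (Fin n) (Fin n) ℂ),
      ∑ i, g i • F i = Y →
      (Y.trace = g 0 * n ∧ ∀ j, (Y * G j).trace = 2 * g (Fin.succ j)) := by
    intro g Y hY
    constructor
    · have := congrArg Matrix.trace hY
      rw [Matrix.trace_sum] at this
      simp only [Matrix.trace_smul, smul_eq_mul] at this
      rw [Fin.sum_univ_succ] at this
      simp only [hF, Fin.cons_zero, Fin.cons_succ, Matrix.trace_one, htr,
        mul_zero, Finset.sum_const_zero, add_zero, Fintype.card_fin] at this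
      rw [← this]
    · intro j
      have := congrArg (fun Z => (Z * G j).trace) hY
      simp only [Finset.sum_mul, Matrix.smul_mul, Matrix.trace_sum,
        Matrix.trace_smul, smul_eq_mul] at this
      rw [Fin.sum_univ_succ] at this
      simp only [hF, Fin.cons_zero, Fin.cons_succ, Matrix.one_mul, htr, horth,
        mul_zero, zero_add, mul_ite, mul_one] at this
      rw [Finset.sum_ite_eq' Finset.univ j] at this
      simp only [Finset.mem_univ, if_true] at this
      rw [← this]; ring
  have li : LinearIndependent ℂ F := by
    rw [Fintype.linearIndependent_iff]
    intro g hg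
    obtain ⟨h0, hsucc⟩ := key g 0 hg
    have hn0 : (n : ℂ) ≠ 0 := by
      exact_mod_cast Nat.cast_ne_zero.mpr (by omega)
    have hg0 : g 0 = 0 := by
      rw [Matrix.trace_zero] at h0
      exact (mul_eq_zero.mp h0.symm).resolve_right hn0
    intro i
    refine Fin.cases hg0 (fun j => ?_) i
    have := hsucc j
    rw [Matrix.zero_mul, Matrix.trace_zero] at this
    have h2 : (2 : ℂ) ≠ 0 := two_ne_zero
    exact (mul_eq_zero.mp this.symm).resolve_left h2
  have hcard : Fintype.card (Fin (n ^ 2 - 1 + 1)) = Module.finrank ℂ (Matrix (Fin n) (Fin n) ℂ) := by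
    rw [Fintype.card_fin, Module.finrank_matrix]
    have h2 : 0 < n * n := Nat.mul_pos (by omega) (by omega)
    simp only [Fintype.card_fin, Module.finrank_self, mul_one]
    have : n ^ 2 = n * n := sq n
    omega
  let b := basisOfLinearIndependentOfCardEqFinrank li hcard
  have hrepr : ∑ i, b.repr X i • F i = X := by
    have := b.sum_repr X
    rwa [show ⇑b = F from coe_basisOfLinearIndependentOfCardEqFinrank li hcard] at this
  obtain ⟨h0, hsucc⟩ := key (fun i => b.repr X i) X hrepr
  have hn0 : (n : ℂ) ≠ 0 := by
    exact_mod_cast Nat.cast_ne_zero.mpr (by omega)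
  have hr0 : b.repr X 0 = 0 := by
    rw [hX0] at h0
    exact (mul_eq_zero.mp h0.symm).resolve_right hn0
  have hrs : ∀ j, b.repr X (Fin.succ j) = 0 := by
    intro j
    have := hsucc j
    rw [hXj j] at this
    exact (mul_eq_zero.mp this.symm).resolve_left two_ne_zero
  rw [← hrepr]
  refine Finset.sum_eq_zero fun i _ => ?_
  refine Fin.cases ?_ (fun j => ?_) i
  · rw [hr0, zero_smul]
  · rw [hrs j, zero_smul]
open Matrix

lemma herm_trace_real {n : ℕ} {A B : Matrix (Fin n) (Fin n) ℂ}
    (hA : A.IsHermitian) (hB : B.IsHermitian) :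
    ((A * B).trace.re : ℂ) = (A * B).trace := by
  have h : star (A * B).trace = (A * B).trace := by
    rw [← Matrix.trace_conjTranspose, Matrix.conjTranspose_mul, hA.eq, hB.eq,
      Matrix.trace_mul_comm]
  exact Complex.conj_eq_iff_re.mp h

lemma herm_trace_eq {n : ℕ} {A : Matrix (Fin n) (Fin n) ℂ} (hA : A.IsHermitian) :
    A.trace = ∑ i, (hA.eigenvalues i : ℂ) := by
  exact hA.trace_eq_sum_eigenvalues

lemma creal_smul {n : ℕ} (r : ℝ) (v : Fin n → ℂ) : (r : ℂ) • v = r • v := by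
  ext x; simp [Complex.real_smul]

open ComplexOrder in
lemma herm_sq_zero {n : ℕ} {M : Matrix (Fin n) (Fin n) ℂ} (hM : M.IsHermitian)
    (h : M * M = 0) : M = 0 :=
  Matrix.conjTranspose_mul_self_eq_zero.mp (by rwa [hM.eq])

theorem stmt_3 (n : ℕ) (hn : 3 ≤ n) (hodd : Odd n)
    (G : Fin (n ^ 2 - 1) → Matrix (Fin n) (Fin n) ℂ)
    (hherm : ∀ i, (G i).IsHermitian)
    (htr : ∀ i, (G i).trace = 0)
    (horth : ∀ i j, (G i * G j).trace = if i = j then 2 else 0)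
    (D : Fin (n ^ 2 - 1) → Matrix (Fin (n ^ 2 - 1)) (Fin (n ^ 2 - 1)) ℝ)
    (hD : ∀ k i j, D k i j
      = (1 / ((n : ℝ) - 2)) * Real.sqrt ((n : ℝ) * ((n : ℝ) - 1) / 2)
          * ((1 / 4) * ((G i * G j + G j * G i) * G k).trace.re))
    (α : Fin (n ^ 2 - 1) → ℝ)
    (hα : ∑ k, α k • D k = 0) :
    ∀ k, α k = 0 := by
  have hn3 : (3 : ℝ) ≤ (n : ℝ) := by exact_mod_cast hn
  have hc0 : (1 / ((n : ℝ) - 2)) * Real.sqrt ((n : ℝ) * ((n : ℝ) - 1) / 2) * (1 / 4) ≠ 0 := by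
    refine mul_ne_zero (mul_ne_zero ?_ ?_) (by norm_num)
    · exact one_div_ne_zero (by linarith)
    · exact ne_of_gt (Real.sqrt_pos.mpr (by nlinarith))
  -- step 1: coefficient sums vanish
  have h1 : ∀ i j, ∑ k, α k * ((G i * G j + G j * G i) * G k).trace.re = 0 := by
    intro i j
    have h := congrFun (congrFun hα i) j
    simp only [Matrix.sum_apply, Matrix.smul_apply, smul_eq_mul, Matrix.zero_apply, hD] at h
    have h2 : ∑ k, α k * ((1 / ((n : ℝ) - 2)) * Real.sqrt ((n : ℝ) * ((n : ℝ) - 1) / 2)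
          * ((1 / 4) * ((G i * G j + G j * G i) * G k).trace.re))
        = ((1 / ((n : ℝ) - 2)) * Real.sqrt ((n : ℝ) * ((n : ℝ) - 1) / 2) * (1 / 4))
          * ∑ k, α k * ((G i * G j + G j * G i) * G k).trace.re := by
      rw [Finset.mul_sum]
      exact Finset.sum_congr rfl fun k _ => by ring
    rw [h2] at h
    exact (mul_eq_zero.mp h).resolve_left hc0
  -- the matrix M
  set M : Matrix (Fin n) (Fin n) ℂ := ∑ k, (α k : ℂ) • G k with hMdef
  have hM : M.IsHermitian := by
    show Mᴴ = M
    rw [hMdef]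
    simp only [Matrix.conjTranspose_sum, Matrix.conjTranspose_smul]
    refine Finset.sum_congr rfl fun k _ => ?_
    rw [(hherm k).eq, Complex.star_def, Complex.conj_ofReal]
  have htrXM : ∀ X : Matrix (Fin n) (Fin n) ℂ,
      (X * M).trace = ∑ k, (α k : ℂ) * (X * G k).trace := by
    intro X
    rw [hMdef, Finset.mul_sum, Matrix.trace_sum]
    exact Finset.sum_congr rfl fun k _ => by rw [Matrix.mul_smul, Matrix.trace_smul, smul_eq_mul]
  have hre : ∀ i j, (((G i * G j + G j * G i) * M).trace).re = 0 := by
    intro i j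
    rw [htrXM]
    rw [Complex.re_sum]
    rw [← h1 i j]
    refine Finset.sum_congr rfl fun k _ => ?_
    simp [Complex.mul_re]
  -- step 2 : trace (M² G j) = 0
  have hMM : (M * M).IsHermitian := by
    show (M * M)ᴴ = M * M
    rw [Matrix.conjTranspose_mul, hM.eq]
  have hTj : ∀ j, ((M * M) * G j).trace = 0 := by
    intro j
    have hMGj : M * G j + G j * M = ∑ i, (α i : ℂ) • (G i * G j + G j * G i) := by
      rw [hMdef, Finset.sum_mul, Finset.mul_sum, ← Finset.sum_add_distrib]
      refine Finset.sum_congr rfl fun i _ => ?_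
      rw [Matrix.smul_mul, Matrix.mul_smul, ← smul_add]
    have e1 : (M * G j + G j * M) * M = ∑ i, (α i : ℂ) • ((G i * G j + G j * G i) * M) := by
      rw [hMGj, Finset.sum_mul]
      exact Finset.sum_congr rfl fun i _ => by rw [Matrix.smul_mul]
    have e2 : (((M * G j + G j * M) * M).trace).re = 0 := by
      rw [e1, Matrix.trace_sum, Complex.re_sum]
      refine Finset.sum_eq_zero fun i _ => ?_
      rw [Matrix.trace_smul]
      simp [Complex.mul_re, hre i j]
    have e3 : ((M * G j + G j * M) * M).trace = 2 * ((M * M) * G j).trace := by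
      rw [Matrix.add_mul, Matrix.trace_add]
      rw [Matrix.trace_mul_comm (M * G j) M, ← Matrix.mul_assoc]
      rw [Matrix.mul_assoc (G j) M M, Matrix.trace_mul_comm (G j) (M * M)]
      ring
    have e4 : (((M * M) * G j).trace.re : ℂ) = ((M * M) * G j).trace :=
      herm_trace_real hMM (hherm j)
    have e5 : ((M * M) * G j).trace.re = 0 := by
      rw [e3] at e2
      simpa using e2
    rw [← e4, e5, Complex.ofReal_zero]
  -- step 3 : M² = c • 1
  set cR : ℝ := ((M * M).trace).re / n with hcRdef
  have hmmre : (((M * M).trace.re : ℂ)) = (M * M).trace := herm_trace_real hM hM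
  have hNtr : (M * M - (cR : ℂ) • 1).trace = 0 := by
    rw [Matrix.trace_sub, Matrix.trace_smul, Matrix.trace_one, ← hmmre]
    rw [hcRdef]
    have hnne : (n : ℂ) ≠ 0 := Nat.cast_ne_zero.mpr (by omega)
    push_cast
    rw [Fintype.card_fin, smul_eq_mul]
    field_simp
    ring
  have hNj : ∀ j, ((M * M - (cR : ℂ) • 1) * G j).trace = 0 := by
    intro j
    rw [Matrix.sub_mul, Matrix.trace_sub, hTj j, Matrix.smul_mul, Matrix.one_mul,
      Matrix.trace_smul, htr j]
    simp
  have hN := key_zero n hn G htr horth _ hNtr hNj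
  have hM2 : M * M = (cR : ℂ) • 1 := by rwa [sub_eq_zero] at hN
  -- step 4 : eigenvalues squared equal cR
  have hpos : 0 < n := by omega
  have hev : ∀ i, hM.eigenvalues i ^ 2 = cR := by
    intro i
    have hv := hM.mulVec_eigenvectorBasis i
    have h2 : (M * M) *ᵥ ⇑(hM.eigenvectorBasis i)
        = ((hM.eigenvalues i : ℂ) ^ 2) • ⇑(hM.eigenvectorBasis i) := by
      rw [← Matrix.mulVec_mulVec, hv, Matrix.mulVec_smul, hv, smul_smul]
      rw [show ((hM.eigenvalues i : ℂ)) ^ 2 = ((hM.eigenvalues i ^ 2 : ℝ) : ℂ) from by push_cast; ring]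
      rw [creal_smul, sq]
    have h3 : (M * M) *ᵥ ⇑(hM.eigenvectorBasis i) = (cR : ℂ) • ⇑(hM.eigenvectorBasis i) := by
      rw [hM2, Matrix.smul_mulVec, Matrix.one_mulVec]
    have hvne : ⇑(hM.eigenvectorBasis i) ≠ 0 := by
      intro h
      exact hM.eigenvectorBasis.orthonormal.ne_zero i (by ext x; exact congrFun h x)
    have h4 : (((hM.eigenvalues i : ℂ) ^ 2) - (cR : ℂ)) • ⇑(hM.eigenvectorBasis i) = 0 := by
      rw [sub_smul, h2.symm.trans h3, sub_self]
    have h5 : ((hM.eigenvalues i : ℂ) ^ 2) = (cR : ℂ) := by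
      rcases smul_eq_zero.mp h4 with h | h
      · exact sub_eq_zero.mp h
      · exact absurd h hvne
    exact_mod_cast h5
  -- trace M = 0 hence sum of eigenvalues zero
  have htrM : M.trace = 0 := by
    rw [hMdef, Matrix.trace_sum]
    refine Finset.sum_eq_zero fun k _ => by rw [Matrix.trace_smul, htr k, smul_zero]
  have hsum : ∑ i, hM.eigenvalues i = 0 := by
    have h := herm_trace_eq hM
    rw [htrM] at h
    exact_mod_cast h.symm
  -- step 5 : cR = 0 using oddness
  have hcR0 : cR = 0 := by
    by_contra hc
    have hge : 0 ≤ cR := (hev ⟨0, hpos⟩) ▸ sq_nonneg _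
    have hcpos : 0 < cR := lt_of_le_of_ne hge (Ne.symm hc)
    set s := Real.sqrt cR with hsdef
    have hs : 0 < s := Real.sqrt_pos.mpr hcpos
    have hs2 : s ^ 2 = cR := Real.sq_sqrt hcpos.le
    have hpm : ∀ i, hM.eigenvalues i = s ∨ hM.eigenvalues i = -s := by
      intro i
      have h := hev i
      have h2 : (hM.eigenvalues i - s) * (hM.eigenvalues i + s) = 0 := by nlinarith
      rcases mul_eq_zero.mp h2 with h3 | h3
      · left; linarith
      · right; linarith
    set t : Fin n → ℤ := fun i => if hM.eigenvalues i = s then 1 else -1 with htdef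
    have hlam : ∀ i, hM.eigenvalues i = (t i : ℝ) * s := by
      intro i
      by_cases h : hM.eigenvalues i = s
      · simp [htdef, h]
      · rcases hpm i with h' | h'
        · exact absurd h' h
        · simp only [htdef, if_neg h]
          push_cast
          rw [h']
          ring
    have hts : ((∑ i, t i : ℤ) : ℝ) * s = 0 := by
      push_cast
      rw [Finset.sum_mul]
      rw [← hsum]
      exact Finset.sum_congr rfl fun i _ => (hlam i).symm
    have ht0 : (∑ i, t i : ℤ) = 0 := by
      have := (mul_eq_zero.mp hts).resolve_right (ne_of_gt hs)
      exact_mod_cast this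
    have hpar : ((∑ i, t i : ℤ) : ZMod 2) = 1 := by
      push_cast
      have he : ∀ i : Fin n, ((t i : ℤ) : ZMod 2) = 1 := by
        intro i
        by_cases h : hM.eigenvalues i = s
        · simp [htdef, h]
        · simp only [htdef, if_neg h]
          decide
      rw [Finset.sum_congr rfl fun i _ => he i]
      rw [Finset.sum_const, Finset.card_univ, Fintype.card_fin]
      obtain ⟨m, hm2⟩ := hodd
      have : (n : ZMod 2) = 1 := by
        rw [hm2]
        push_cast
        rw [show (2 : ZMod 2) = 0 by decide]
        ring
      simp [this]
    rw [ht0] at hpar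
    simp at hpar
  -- step 6 : M = 0
  have hM20 : M * M = 0 := by rw [hM2, hcR0]; simp
  have hM0 : M = 0 := herm_sq_zero hM hM20
  -- conclusion
  intro k
  have hfin : (M * G k).trace = 2 * (α k : ℂ) := by
    rw [hMdef, Finset.sum_mul, Matrix.trace_sum]
    have : ∀ j, ((α j : ℂ) • G j * G k).trace = (α j : ℂ) * (if j = k then 2 else 0) := by
      intro j
      rw [Matrix.smul_mul, Matrix.trace_smul, horth j k, smul_eq_mul]
    rw [Finset.sum_congr rfl fun j _ => this j]
    simp [Finset.sum_ite_eq', mul_comm]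
  rw [hM0, Matrix.zero_mul, Matrix.trace_zero] at hfin
  have : (α k : ℂ) = 0 := by
    have h2 : (2 : ℂ) ≠ 0 := two_ne_zero
    exact (mul_eq_zero.mp hfin.symm).resolve_left h2
  exact_mod_cast this
end

section
/- Let n ≥ 3 and let G₁,…,G_{n²−1} be n×n complex Hermitian matrices with Tr(G_i) = 0 for all i and Tr(G_i G_j) = 2δ_{ij} for all i, j. For x, y ∈ ℝ^{n²−1} define the star product x⋆y ∈ ℝ^{n²−1} by (x⋆y)_k = (1/(n−2))·√(n(n−1)/2)·∑_{i,j} d_{ijk} x_i y_j, where d_{ijk} = (1/4)·Re Tr((G_iG_j + G_jG_i)G_k). Then for every x ∈ ℝ^{n²−1}, ‖x⋆x‖² = (n(n−1)/(4(n−2)²))·[Re Tr((x·G)⁴) − (4/n)·‖x‖⁴], where x·G = ∑_{k=1}^{n²−1} x_k G_k and ‖·‖ is the Euclidean norm on ℝ^{n²−1}. -/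
open Module Matrix

theorem stmt_4 (n : ℕ) (hn : 3 ≤ n)
    (G : Fin (n ^ 2 - 1) → Matrix (Fin n) (Fin n) ℂ)
    (hherm : ∀ i, (G i).IsHermitian)
    (htr : ∀ i, (G i).trace = 0)
    (horth : ∀ i j, (G i * G j).trace = if i = j then 2 else 0)
    (d : Fin (n ^ 2 - 1) → Fin (n ^ 2 - 1) → Fin (n ^ 2 - 1) → ℝ)
    (hd : ∀ i j k, d i j k
      = (1 / 4) * ((G i * G j + G j * G i) * G k).trace.re)
    (x : Fin (n ^ 2 - 1) → ℝ)
    (s : Fin (n ^ 2 - 1) → ℝ)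
    (hs : ∀ k, s k
      = (1 / ((n : ℝ) - 2)) * Real.sqrt ((n : ℝ) * ((n : ℝ) - 1) / 2)
          * ∑ i, ∑ j, d i j k * x i * x j) :
    ∑ k, (s k) ^ 2
      = ((n : ℝ) * ((n : ℝ) - 1) / (4 * ((n : ℝ) - 2) ^ 2))
          * (((∑ k, (x k : ℂ) • G k) ^ 4).trace.re
              - (4 / (n : ℝ)) * (∑ k, (x k) ^ 2) ^ 2) := by
  have hnR : (n : ℝ) ≠ 0 := by positivity
  have hnC : (n : ℂ) ≠ 0 := by exact_mod_cast Nat.cast_ne_zero.mpr (by omega)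
  set A := ∑ k, (x k : ℂ) • G k with hAdef
  have hAH : Aᴴ = A := by
    simp only [hAdef, Matrix.conjTranspose_sum, Matrix.conjTranspose_smul,
      (hherm _).eq, Complex.star_def, Complex.conj_ofReal]
  set B := A ^ 2 with hBdef
  have hBH : Bᴴ = B := by rw [hBdef, sq, Matrix.conjTranspose_mul, hAH]
  have hAA : A * A = ∑ i, ∑ j, ((x i : ℂ) * (x j : ℂ)) • (G i * G j) := by
    rw [hAdef, Finset.sum_mul_sum]
    refine Finset.sum_congr rfl fun i _ => Finset.sum_congr rfl fun j _ => ?_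
    rw [Matrix.smul_mul, Matrix.mul_smul, smul_smul]
  have hB : B = ∑ i, ∑ j, ((x i : ℂ) * (x j : ℂ)) • (G i * G j) := by
    rw [hBdef, sq, hAA]
  -- trace of B
  have htB : B.trace = ((2 * ∑ k, (x k) ^ 2 : ℝ) : ℂ) := by
    rw [hB]
    simp only [Matrix.trace_sum, Matrix.trace_smul, horth, smul_eq_mul, mul_ite, mul_zero,
      Finset.sum_ite_eq, Finset.mem_univ, if_true]
    push_cast
    rw [Finset.mul_sum]
    exact Finset.sum_congr rfl (fun i _ => by ring)
  -- trace of B * G k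
  have htBG : ∀ k, (B * G k).trace
      = ∑ i, ∑ j, ((x i : ℂ) * (x j : ℂ)) * (G i * G j * G k).trace := by
    intro k
    rw [hB]
    simp [Matrix.sum_mul, Matrix.smul_mul, Matrix.trace_sum, Matrix.trace_smul]
  -- trace of B * G k is real
  have hsa : ∀ k, (starRingEnd ℂ) ((B * G k).trace) = (B * G k).trace := by
    intro k
    have h1 : ((B * G k)ᴴ).trace = (B * G k).trace := by
      rw [Matrix.conjTranspose_mul, hBH, (hherm k).eq, Matrix.trace_mul_comm]
    rw [Matrix.trace_conjTranspose] at h1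
    exact h1
  set t : Fin (n ^ 2 - 1) → ℝ := fun k => ((B * G k).trace).re with htdef
  have ht : ∀ k, ((t k : ℝ) : ℂ) = (B * G k).trace := fun k =>
    Complex.conj_eq_iff_re.mp (hsa k)
  -- s in terms of t
  have hst : ∀ k, s k
      = (1 / ((n : ℝ) - 2)) * Real.sqrt ((n : ℝ) * ((n : ℝ) - 1) / 2) * (t k / 2) := by
    intro k
    rw [hs k]
    congr 1
    have h1 : ∀ i j : Fin (n ^ 2 - 1), d i j k * x i * x j
        = (1/4) * ((G i * G j * G k).trace.re * x i * x j)
          + (1/4) * ((G j * G i * G k).trace.re * x i * x j) := by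
      intro i j
      rw [hd]
      simp only [Matrix.add_mul, Matrix.trace_add, Complex.add_re]
      ring
    simp only [h1, Finset.sum_add_distrib, ← Finset.mul_sum]
    have hsym : (∑ i, ∑ j, (G j * G i * G k).trace.re * x i * x j)
        = ∑ i, ∑ j, (G i * G j * G k).trace.re * x i * x j := by
      rw [Finset.sum_comm]
      exact Finset.sum_congr rfl fun i _ => Finset.sum_congr rfl fun j _ => by ring
    rw [hsym]
    have htk : t k = ∑ i, ∑ j, (G i * G j * G k).trace.re * x i * x j := by
      rw [htdef]
      simp only [htBG k, Complex.re_sum]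
      refine Finset.sum_congr rfl fun i _ => Finset.sum_congr rfl fun j _ => ?_
      rw [← Complex.ofReal_mul, Complex.re_ofReal_mul]
      ring
    rw [htk]; ring
  -- basis
  set f : Option (Fin (n ^ 2 - 1)) → Matrix (Fin n) (Fin n) ℂ := fun o => Option.elim o 1 G with hfdef
  have hone : (1 : Matrix (Fin n) (Fin n) ℂ).trace = (n : ℂ) := by
    simp [Matrix.trace_one]
  have hli : LinearIndependent ℂ f := by
    rw [Fintype.linearIndependent_iff]
    intro g hg i
    have htrace : ∀ M : Matrix (Fin n) (Fin n) ℂ,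
        ((∑ o, g o • f o) * M).trace = g none * M.trace + ∑ j, g (some j) * (G j * M).trace := by
      intro M
      rw [Matrix.sum_mul]
      simp [Matrix.smul_mul, Matrix.trace_sum, Matrix.trace_smul, Fintype.sum_option, hfdef,
        Matrix.one_mul]
    match i with
    | none =>
      have h0 : ((∑ o, g o • f o) * 1).trace = 0 := by rw [hg, Matrix.zero_mul, Matrix.trace_zero]
      rw [htrace 1] at h0
      simp only [hone, Matrix.mul_one, htr, mul_zero, Finset.sum_const_zero, add_zero] at h0
      exact (mul_eq_zero.mp h0).resolve_right hnC
    | some k =>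
      have h0 : ((∑ o, g o • f o) * G k).trace = 0 := by
        rw [hg, Matrix.zero_mul, Matrix.trace_zero]
      rw [htrace (G k)] at h0
      simp only [htr, mul_zero, horth, mul_ite, Finset.sum_ite_eq, Finset.sum_ite_eq',
        Finset.mem_univ, if_true, zero_add] at h0
      exact (mul_eq_zero.mp h0).resolve_right two_ne_zero
  have hcard : Fintype.card (Option (Fin (n ^ 2 - 1))) = finrank ℂ (Matrix (Fin n) (Fin n) ℂ) := by
    have h1 : 1 ≤ n ^ 2 := Nat.one_le_pow _ _ (by omega)
    have h2 : n ^ 2 = n * n := sq n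
    rw [Module.finrank_matrix]
    simp only [Fintype.card_option, Fintype.card_fin, finrank_self, mul_one]
    omega
  let b := basisOfLinearIndependentOfCardEqFinrank hli hcard
  have hrepr : B = ∑ o, b.repr B o • f o := by
    have h := (b.sum_repr B).symm
    simpa only [b, coe_basisOfLinearIndependentOfCardEqFinrank] using h
  have htraceF : ∀ M : Matrix (Fin n) (Fin n) ℂ,
      (B * M).trace = (b.repr B none) * M.trace + ∑ j, (b.repr B (some j)) * (G j * M).trace := by
    intro M
    conv_lhs => rw [hrepr]
    rw [Matrix.sum_mul]
    simp [Matrix.smul_mul, Matrix.trace_sum, Matrix.trace_smul, Fintype.sum_option, hfdef]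
  have hcn : b.repr B none = B.trace / (n : ℂ) := by
    rw [eq_div_iff hnC]
    have h := htraceF 1
    simpa [hone, htr] using h.symm
  have hcs : ∀ k, b.repr B (some k) = ((t k : ℝ) : ℂ) / 2 := by
    intro k
    rw [ht k, eq_div_iff (two_ne_zero)]
    have h := htraceF (G k)
    simpa [htr, horth, mul_ite, Finset.sum_ite_eq, Finset.sum_ite_eq'] using h.symm
  have hBB : (B * B).trace
      = (b.repr B none) * B.trace + ∑ k, (b.repr B (some k)) * (B * G k).trace := by
    rw [htraceF B]
    congr 1
    exact Finset.sum_congr rfl fun j _ => by rw [Matrix.trace_mul_comm]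
  have hsum : ∑ k, (b.repr B (some k)) * (B * G k).trace = ((∑ k, (t k) ^ 2 : ℝ) : ℂ) / 2 := by
    push_cast
    rw [Finset.sum_div]
    refine Finset.sum_congr rfl fun k _ => ?_
    rw [hcs k, ← ht k]
    ring
  have hA4 : (A ^ 4).trace
      = ((((2 * ∑ k, x k ^ 2)) ^ 2 / n + (∑ k, (t k) ^ 2) / 2 : ℝ) : ℂ) := by
    have h4 : A ^ 4 = B * B := by
      rw [show (4 : ℕ) = 2 + 2 from rfl, pow_add, ← hBdef]
    rw [h4, hBB, hcn, htB, hsum]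
    push_cast
    field_simp
  have hre : (A ^ 4).trace.re
      = (2 * ∑ k, x k ^ 2) ^ 2 / n + (∑ k, (t k) ^ 2) / 2 := by
    rw [hA4, Complex.ofReal_re]
  rw [hre]
  have hn3 : (3 : ℝ) ≤ (n : ℝ) := by exact_mod_cast hn
  have hsqrt : Real.sqrt ((n : ℝ) * ((n : ℝ) - 1) / 2) ^ 2 = (n : ℝ) * ((n : ℝ) - 1) / 2 :=
    Real.sq_sqrt (by nlinarith)
  have hlhs : ∑ k, s k ^ 2
      = (1 / ((n : ℝ) - 2)) ^ 2 * ((n : ℝ) * ((n : ℝ) - 1) / 2) / 4 * ∑ k, (t k) ^ 2 := by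
    rw [Finset.mul_sum]
    refine Finset.sum_congr rfl fun k _ => ?_
    rw [hst k, mul_pow, mul_pow, hsqrt]
    ring
  rw [hlhs]
  have hne2 : (n : ℝ) - 2 ≠ 0 := by intro h; nlinarith
  field_simp
  ring
end

section
/- Let n ≥ 3 and let G₁,…,G_{n²−1} be n×n complex Hermitian matrices with Tr(G_i) = 0 for all i and Tr(G_i G_j) = 2δ_{ij} for all i, j. For r ∈ ℝ^{n²−1} set ρ(r) = (1/n)(I + √(n(n−1)/2)·∑_k r_k G_k), and define the star product r⋆r ∈ ℝ^{n²−1} by (r⋆r)_k = (1/(n−2))·√(n(n−1)/2)·∑_{i,j} d_{ijk} r_i r_j with d_{ijk} = (1/4)·Re Tr((G_iG_j + G_jG_i)G_k). Then ρ(r)² = ρ(r) if and only if ‖r‖ = 1 and r⋆r = r, where ‖·‖ is the Euclidean norm on ℝ^{n²−1}. -/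
set_option maxHeartbeats 1000000


theorem stmt_5 (n : ℕ) (hn : 3 ≤ n)
    (G : Fin (n ^ 2 - 1) → Matrix (Fin n) (Fin n) ℂ)
    (hherm : ∀ i, (G i).IsHermitian)
    (htr : ∀ i, (G i).trace = 0)
    (horth : ∀ i j, (G i * G j).trace = if i = j then 2 else 0)
    (d : Fin (n ^ 2 - 1) → Fin (n ^ 2 - 1) → Fin (n ^ 2 - 1) → ℝ)
    (hd : ∀ i j k, d i j k
      = (1 / 4) * ((G i * G j + G j * G i) * G k).trace.re)
    (r : Fin (n ^ 2 - 1) → ℝ)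
    (ρ : Matrix (Fin n) (Fin n) ℂ)
    (hρ : ρ = ((1 : ℂ) / n)
      • ((1 : Matrix (Fin n) (Fin n) ℂ)
          + ((Real.sqrt ((n : ℝ) * ((n : ℝ) - 1) / 2) : ℝ) : ℂ)
              • ∑ k, (r k : ℂ) • G k))
    (s : Fin (n ^ 2 - 1) → ℝ)
    (hs : ∀ k, s k
      = (1 / ((n : ℝ) - 2)) * Real.sqrt ((n : ℝ) * ((n : ℝ) - 1) / 2)
          * ∑ i, ∑ j, d i j k * r i * r j) :
    ρ ^ 2 = ρ ↔ (Real.sqrt (∑ k, (r k) ^ 2) = 1 ∧ s = r) := by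
  have hnR : (3 : ℝ) ≤ (n : ℝ) := by exact_mod_cast hn
  have hn0 : (n : ℂ) ≠ 0 := Nat.cast_ne_zero.mpr (by omega)
  have hnR0 : (n : ℝ) ≠ 0 := by positivity
  have hn2R : ((n : ℝ) - 2) ≠ 0 := by linarith
  set c : ℝ := Real.sqrt ((n : ℝ) * ((n : ℝ) - 1) / 2) with hcdef
  have hc2 : c ^ 2 = (n : ℝ) * ((n : ℝ) - 1) / 2 := Real.sq_sqrt (by nlinarith)
  have hc0 : c ≠ 0 := by
    intro h
    rw [h] at hc2
    nlinarith
  set A : Matrix (Fin n) (Fin n) ℂ := ∑ k, (r k : ℂ) • G k with hA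
  set t : Fin (n ^ 2 - 1) → ℝ := fun k => ∑ i, ∑ j, d i j k * r i * r j with ht
  -- trace of A
  have htrA : A.trace = 0 := by simp [hA, Matrix.trace_sum, Matrix.trace_smul, htr]
  -- trace of A * G j
  have htrAG : ∀ j, (A * G j).trace = 2 * (r j : ℂ) := by
    intro j
    rw [hA, Matrix.sum_mul]
    simp only [Matrix.smul_mul, Matrix.trace_sum, Matrix.trace_smul, horth, smul_eq_mul,
      mul_ite, mul_zero]
    simp [Finset.sum_ite_eq', mul_comm]
  -- expansion of A * A
  have hAA : A * A = ∑ i, ∑ j, ((r i : ℂ) * (r j : ℂ)) • (G i * G j) := by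
    rw [hA, Finset.sum_mul_sum]
    refine Finset.sum_congr rfl fun i _ => Finset.sum_congr rfl fun j _ => ?_
    rw [smul_mul_assoc, mul_smul_comm, smul_smul]
  -- trace of A * A
  have htrAA : (A * A).trace = ((2 * ∑ k, (r k) ^ 2 : ℝ) : ℂ) := by
    rw [hAA]
    simp only [Matrix.trace_sum, Matrix.trace_smul, horth, smul_eq_mul, mul_ite, mul_zero]
    rw [Finset.sum_comm]
    simp only [Finset.sum_ite_eq', Finset.mem_univ, if_true]
    push_cast
    simp only [Finset.mul_sum]
    exact Finset.sum_congr rfl fun i _ => by ring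
  -- realness of Tr(X*Y) for Hermitian X Y
  have hreal : ∀ X Y : Matrix (Fin n) (Fin n) ℂ, X.IsHermitian → Y.IsHermitian →
      ((X * Y).trace) = (((X * Y).trace.re : ℝ) : ℂ) := by
    intro X Y hX hY
    have : (starRingEnd ℂ) ((X * Y).trace) = (X * Y).trace := by
      rw [← Complex.star_def, ← Matrix.trace_conjTranspose, Matrix.conjTranspose_mul,
        hX.eq, hY.eq, Matrix.trace_mul_comm]
    exact (Complex.conj_eq_iff_re.mp this).symm
  have hsym : ∀ i j, (G i * G j + G j * G i).IsHermitian := by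
    intro i j
    unfold Matrix.IsHermitian
    rw [Matrix.conjTranspose_add, Matrix.conjTranspose_mul, Matrix.conjTranspose_mul,
      (hherm i).eq, (hherm j).eq, add_comm]
  have htrd : ∀ i j k, ((G i * G j + G j * G i) * G k).trace = ((4 * d i j k : ℝ) : ℂ) := by
    intro i j k
    rw [hreal _ _ (hsym i j) (hherm k), hd i j k]
    push_cast
    ring
  -- trace of A * A * G k
  have htrAAG : ∀ k, (A * A * G k).trace = 2 * ((t k : ℝ) : ℂ) := by
    intro k
    have hz : (A * A * G k).trace = ∑ i, ∑ j, ((r i : ℂ) * r j) * (G i * G j * G k).trace := by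
      rw [hAA, Matrix.sum_mul]
      simp [Matrix.sum_mul, Matrix.smul_mul, Matrix.trace_sum, Matrix.trace_smul, smul_eq_mul]
    have hz' : (A * A * G k).trace = ∑ i, ∑ j, ((r i : ℂ) * r j) * (G j * G i * G k).trace := by
      rw [hz, Finset.sum_comm]
      exact Finset.sum_congr rfl fun i _ => Finset.sum_congr rfl fun j _ => by ring_nf
    have h2 : (A * A * G k).trace + (A * A * G k).trace
        = ∑ i, ∑ j, ((r i : ℂ) * r j) * ((4 * d i j k : ℝ) : ℂ) := by
      nth_rewrite 1 [hz]; nth_rewrite 1 [hz']; rw [← Finset.sum_add_distrib]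
      refine Finset.sum_congr rfl fun i _ => ?_
      rw [← Finset.sum_add_distrib]
      refine Finset.sum_congr rfl fun j _ => ?_
      rw [← htrd i j k, Matrix.add_mul, Matrix.trace_add]
      ring
    have : (2 : ℂ) * (A * A * G k).trace = 2 * (2 * ((t k : ℝ) : ℂ)) := by
      rw [two_mul, h2, ht]
      push_cast
      simp only [Finset.mul_sum]
      exact Finset.sum_congr rfl fun i _ => Finset.sum_congr rfl fun j _ => by ring
    exact mul_left_cancel₀ two_ne_zero this
  -- trace helpers for combinations a • 1 + ∑ b k • G k
  have htrM : ∀ (a : ℂ) (b : Fin (n ^ 2 - 1) → ℂ),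
      (a • (1 : Matrix (Fin n) (Fin n) ℂ) + ∑ k, b k • G k).trace = a * n := by
    intro a b
    simp [Matrix.trace_sum, Matrix.trace_smul, htr, Matrix.trace_one, smul_eq_mul]
  have htrMG : ∀ (a : ℂ) (b : Fin (n ^ 2 - 1) → ℂ) (j),
      ((a • (1 : Matrix (Fin n) (Fin n) ℂ) + ∑ k, b k • G k) * G j).trace = 2 * b j := by
    intro a b j
    rw [Matrix.add_mul, Matrix.smul_mul, Matrix.one_mul, Matrix.sum_mul]
    simp only [Matrix.smul_mul, Matrix.trace_add, Matrix.trace_sum, Matrix.trace_smul, htr, horth,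
      smul_eq_mul, mul_zero, zero_add]
    simp [mul_ite, Finset.sum_ite_eq', mul_comm]
  -- reduce ρ ^ 2 = ρ to a matrix equation
  have hiff : ρ ^ 2 = ρ ↔ ((c : ℂ)) ^ 2 • (A * A)
      = (((n : ℂ) - 1)) • (1 : Matrix (Fin n) (Fin n) ℂ) + ((((n : ℂ)) - 2) * c) • A := by
    have key : ρ ^ 2 - ρ = ((1 : ℂ) / (n : ℂ) ^ 2) •
        ((c : ℂ) ^ 2 • (A * A) - ((n : ℂ) - 1) • (1 : Matrix (Fin n) (Fin n) ℂ)
          - (((n : ℂ) - 2) * c) • A) := by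
      rw [hρ, pow_two]
      simp only [smul_mul_smul_comm, add_mul, mul_add, Matrix.one_mul, Matrix.mul_one,
        smul_mul_assoc, mul_smul_comm, smul_smul]
      match_scalars <;> field_simp <;> try ring
      all_goals tauto
    constructor
    · intro h
      have h0 : ρ ^ 2 - ρ = 0 := sub_eq_zero_of_eq h
      rw [key] at h0
      have h1 : (c : ℂ) ^ 2 • (A * A) - ((n : ℂ) - 1) • (1 : Matrix (Fin n) (Fin n) ℂ)
          - (((n : ℂ) - 2) * c) • A = 0 :=
        (smul_eq_zero.mp h0).resolve_left (by simp [hn0])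
      linear_combination (norm := module) h1
    · intro h
      have h1 : (c : ℂ) ^ 2 • (A * A) - ((n : ℂ) - 1) • (1 : Matrix (Fin n) (Fin n) ℂ)
          - (((n : ℂ) - 2) * c) • A = 0 := by rw [h]; abel
      rw [h1, smul_zero] at key
      exact sub_eq_zero.mp key
  have hc2C : ((c : ℝ) : ℂ) ^ 2 = (n : ℂ) * ((n : ℂ) - 1) / 2 := by
    rw [← Complex.ofReal_pow, hc2]
    push_cast
    ring
  rw [hiff]
  constructor
  · -- forward direction
    intro h
    have hnorm : (∑ k, (r k) ^ 2) = 1 := by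
      have hC := congrArg Matrix.trace h
      rw [Matrix.trace_smul, htrAA, Matrix.trace_add, Matrix.trace_smul, Matrix.trace_smul,
        Matrix.trace_one, htrA, smul_zero, add_zero, smul_eq_mul, smul_eq_mul, hc2C] at hC
      simp only [Fintype.card_fin] at hC
      push_cast at hC
      have hR : (n : ℝ) * ((n : ℝ) - 1) / 2 * (2 * ∑ k, (r k) ^ 2)
          = ((n : ℝ) - 1) * (n : ℝ) := by
        have : (((n : ℝ) * ((n : ℝ) - 1) / 2 * (2 * ∑ k, (r k) ^ 2) : ℝ) : ℂ)
            = ((((n : ℝ) - 1) * (n : ℝ) : ℝ) : ℂ) := by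
          push_cast
          linear_combination hC
        exact_mod_cast this
      have hnn : (n : ℝ) * ((n : ℝ) - 1) ≠ 0 := by
        apply mul_ne_zero hnR0
        linarith
      have := mul_left_cancel₀ hnn
        (show (n : ℝ) * ((n : ℝ) - 1) * (∑ k, (r k) ^ 2) = (n : ℝ) * ((n : ℝ) - 1) * 1 by
          linear_combination hR)
      simpa using this
    refine ⟨Real.sqrt_eq_one.mpr hnorm, funext fun k => ?_⟩
    have hCk := congrArg (fun M => (M * G k).trace) h
    simp only [Matrix.smul_mul, Matrix.add_mul, Matrix.one_mul, Matrix.trace_smul,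
      Matrix.trace_add, smul_eq_mul] at hCk
    rw [htrAAG k, htrAG k, htr k, mul_zero, zero_add] at hCk
    -- hCk : ↑c ^ 2 * (2 * ↑(t k)) = (↑n - 2) * ↑c * (2 * ↑(r k))
    have hRk : c ^ 2 * (2 * t k) = ((n : ℝ) - 2) * c * (2 * r k) := by
      have : ((c ^ 2 * (2 * t k) : ℝ) : ℂ) = ((((n : ℝ) - 2) * c * (2 * r k) : ℝ) : ℂ) := by
        push_cast
        linear_combination hCk
      exact_mod_cast this
    have hck : c * t k = ((n : ℝ) - 2) * r k :=
      mul_left_cancel₀ hc0 (by linear_combination hRk / 2)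
    rw [hs k]
    field_simp
    linear_combination hck
  · -- backward direction
    rintro ⟨hnorm1, hsr⟩
    have hnorm : (∑ k, (r k) ^ 2) = 1 := Real.sqrt_eq_one.mp hnorm1
    have hck : ∀ k, c * t k = ((n : ℝ) - 2) * r k := by
      intro k
      have := congrFun hsr k
      rw [hs k] at this
      field_simp at this
      linear_combination this
    -- spanning argument: express A * A in the basis {1, G k}
    set f : Option (Fin (n ^ 2 - 1)) → Matrix (Fin n) (Fin n) ℂ := fun o => o.elim 1 G with hf
    have hsmul : ∀ g : Option (Fin (n ^ 2 - 1)) → ℂ,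
        ∑ o, g o • f o = g none • 1 + ∑ k, g (some k) • G k := by
      intro g
      rw [Fintype.sum_option]
      rfl
    have li : LinearIndependent ℂ f := by
      rw [Fintype.linearIndependent_iff]
      intro g hg
      rw [hsmul] at hg
      have h1 : g none * n = 0 := by
        rw [← htrM (g none) (fun k => g (some k)), hg, Matrix.trace_zero]
      have h1' : g none = 0 := (mul_eq_zero.mp h1).resolve_right hn0
      have h2 : ∀ j, g (some j) = 0 := by
        intro j
        have := htrMG (g none) (fun k => g (some k)) j
        rw [hg, Matrix.zero_mul, Matrix.trace_zero] at this
        exact (mul_eq_zero.mp this.symm).resolve_left two_ne_zero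
      intro o
      cases o with
      | none => exact h1'
      | some j => exact h2 j
    have hcard : Fintype.card (Option (Fin (n ^ 2 - 1)))
        = Module.finrank ℂ (Matrix (Fin n) (Fin n) ℂ) := by
      rw [Module.finrank_matrix, Module.finrank_self]
      simp only [Fintype.card_option, Fintype.card_fin, mul_one]
      have h1 : 9 ≤ n ^ 2 := by nlinarith
      have h2 : n ^ 2 = n * n := sq n
      omega
    have hspan := li.span_eq_top_of_card_eq_finrank hcard
    have hB : A * A ∈ Submodule.span ℂ (Set.range f) := by rw [hspan]; trivial
    obtain ⟨g, hg⟩ := (Finsupp.mem_span_range_iff_exists_finsupp).mp hB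
    have hgB : A * A = g none • 1 + ∑ k, g (some k) • G k := by
      rw [← hg, Finsupp.sum_fintype _ _ (by simp)]
      simpa using hsmul g
    -- identify the coefficients
    have hgnone : (g none : ℂ) = 2 / n := by
      have h1 : g none * n = ((2 * ∑ k, (r k) ^ 2 : ℝ) : ℂ) := by
        rw [← htrM (g none) (fun k => g (some k)), ← hgB, htrAA]
      rw [hnorm] at h1
      rw [eq_div_iff hn0]
      push_cast at h1
      linear_combination h1
    have hgsome : ∀ j, (g (some j) : ℂ) = ((t j : ℝ) : ℂ) := by
      intro j
      have h1 : 2 * g (some j) = 2 * ((t j : ℝ) : ℂ) := by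
        rw [← htrMG (g none) (fun k => g (some k)) j, ← hgB, htrAAG]
      exact mul_left_cancel₀ two_ne_zero h1
    -- assemble
    rw [hgB, hgnone]
    rw [smul_add, smul_smul, Finset.smul_sum]
    rw [hA, Finset.smul_sum]
    congr 1
    · congr 1
      rw [hc2C]
      field_simp
    · refine Finset.sum_congr rfl fun k _ => ?_
      rw [smul_smul, smul_smul, hgsome k]
      congr 1
      have hckC : ((c : ℝ) : ℂ) * ((t k : ℝ) : ℂ) = ((n : ℂ) - 2) * ((r k : ℝ) : ℂ) := by
        have := congrArg (fun x : ℝ => (x : ℂ)) (hck k)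
        push_cast at this
        linear_combination this
      linear_combination ((c : ℝ) : ℂ) * hckC
end

section
/- Let A and B be n×n complex Hermitian matrices (n ≥ 1). Then the infimum over all n×n density matrices ρ of var_ρ(A) + var_ρ(B) equals the infimum over all unit vectors ψ ∈ ℂⁿ of var_ψ(A) + var_ψ(B), where var_ψ(X) = ⟨ψ, X²ψ⟩ − ⟨ψ, Xψ⟩². -/
open Matrix ComplexOrder

private lemma qf_star_eq (n : ℕ) (X : Matrix (Fin n) (Fin n) ℂ) (hX : X.IsHermitian)
    (ψ : Fin n → ℂ) : star (star ψ ⬝ᵥ X *ᵥ ψ) = star ψ ⬝ᵥ X *ᵥ ψ := by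
  conv_lhs => rw [star_dotProduct, star_star, star_mulVec, ← dotProduct_mulVec, hX.eq]

private lemma qf_real (n : ℕ) (X : Matrix (Fin n) (Fin n) ℂ) (hX : X.IsHermitian)
    (ψ : Fin n → ℂ) : star ψ ⬝ᵥ X *ᵥ ψ = ((star ψ ⬝ᵥ X *ᵥ ψ).re : ℂ) :=
  (Complex.conj_eq_iff_re.mp (qf_star_eq n X hX ψ)).symm

private lemma basis_unit (n : ℕ) {ρ : Matrix (Fin n) (Fin n) ℂ} (h : ρ.IsHermitian) (i : Fin n) :
    (∑ j, Complex.normSq (h.eigenvectorBasis i j)) = 1 := by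
  have h1 : ‖h.eigenvectorBasis i‖ = 1 := h.eigenvectorBasis.orthonormal.1 i
  have h0 := EuclideanSpace.norm_eq (h.eigenvectorBasis i)
  rw [h1] at h0
  have h2 : (∑ j, ‖h.eigenvectorBasis i j‖^2) = 1 := Real.sqrt_eq_one.mp h0.symm
  rw [← h2]
  congr 1; ext j; rw [Complex.normSq_eq_norm_sq]

private lemma diag_entry (n : ℕ) (X U : Matrix (Fin n) (Fin n) ℂ) (i : Fin n) :
    (star U * X * U) i i = star (fun j => U j i) ⬝ᵥ X *ᵥ (fun j => U j i) := by
  simp only [Matrix.star_apply, Matrix.mul_apply, dotProduct, mulVec, Pi.star_apply,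
    Finset.sum_mul, Finset.mul_sum]
  rw [Finset.sum_comm]
  apply Finset.sum_congr rfl; intro j _
  apply Finset.sum_congr rfl; intro k _
  ring

private lemma trace_decomp (n : ℕ) (ρ X : Matrix (Fin n) (Fin n) ℂ) (h : ρ.PosSemidef) :
    (X * ρ).trace = ∑ i, (h.1.eigenvalues i : ℂ) *
      (star (⇑(h.1.eigenvectorBasis i)) ⬝ᵥ X *ᵥ ⇑(h.1.eigenvectorBasis i)) := by
  set hρ := h.1
  set U : Matrix (Fin n) (Fin n) ℂ := (IsHermitian.eigenvectorUnitary hρ : Matrix (Fin n) (Fin n) ℂ) with hU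
  have hspec := hρ.spectral_theorem
  have hcol : ∀ i, (fun j => U j i) = ⇑(hρ.eigenvectorBasis i) := by
    intro i; funext j; exact hρ.eigenvectorUnitary_apply j i
  calc (X * ρ).trace = (X * (U * diagonal (RCLike.ofReal ∘ hρ.eigenvalues) * star U)).trace := by
        exact congrArg (fun M => (X * M).trace) hspec
    _ = ((star U) * X * U * diagonal (RCLike.ofReal ∘ hρ.eigenvalues)).trace := by
        rw [← Matrix.mul_assoc, Matrix.trace_mul_cycle]
        rw [Matrix.mul_assoc (star U), Matrix.mul_assoc (star U), ← Matrix.mul_assoc X,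
          ← Matrix.mul_assoc (star U) (X * U)]
    _ = ∑ i, (hρ.eigenvalues i : ℂ) * (star (⇑(hρ.eigenvectorBasis i)) ⬝ᵥ X *ᵥ ⇑(hρ.eigenvectorBasis i)) := by
        rw [Matrix.trace]
        apply Finset.sum_congr rfl; intro i _
        rw [Matrix.diag_apply, Matrix.mul_diagonal, diag_entry, hcol]
        simp [mul_comm]

private lemma jensen (n : ℕ) (l a : Fin n → ℝ) (hl : ∀ i, 0 ≤ l i) (hs : ∑ i, l i = 1) :
    (∑ i, l i * a i)^2 ≤ ∑ i, l i * (a i)^2 := by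
  calc (∑ i, l i * a i)^2 = (∑ i, Real.sqrt (l i) * (Real.sqrt (l i) * a i))^2 := by
        congr 1
        apply Finset.sum_congr rfl; intro i _
        rw [← mul_assoc, Real.mul_self_sqrt (hl i)]
    _ ≤ (∑ i, Real.sqrt (l i)^2) * (∑ i, (Real.sqrt (l i) * a i)^2) :=
        Finset.sum_mul_sq_le_sq_mul_sq _ _ _
    _ = ∑ i, l i * (a i)^2 := by
        have h1 : (∑ i, Real.sqrt (l i)^2) = 1 := by
          rw [← hs]; apply Finset.sum_congr rfl; intro i _; exact Real.sq_sqrt (hl i)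
        rw [h1, one_mul]
        apply Finset.sum_congr rfl; intro i _
        rw [mul_pow, Real.sq_sqrt (hl i)]

private lemma val_re (z1 z2 z3 z4 : ℂ) (h2 : z2.im = 0) (h4 : z4.im = 0) :
    (z1 - z2^2 + (z3 - z4^2)).re = (z1.re - z2.re^2) + (z3.re - z4.re^2) := by
  simp [pow_two, Complex.mul_re, h2, h4]

private lemma qf_im (n : ℕ) (X : Matrix (Fin n) (Fin n) ℂ) (hX : X.IsHermitian)
    (ψ : Fin n → ℂ) : (star ψ ⬝ᵥ X *ᵥ ψ).im = 0 := by
  have := congrArg Complex.im (qf_real n X hX ψ)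
  simpa using this

-- key lemma
private lemma key_lemma (n : ℕ) (hn : 1 ≤ n) (A B : Matrix (Fin n) (Fin n) ℂ)
    (hA : A.IsHermitian) (hB : B.IsHermitian) (hA2 : (A^2).IsHermitian) (hB2 : (B^2).IsHermitian)
    (ρ : Matrix (Fin n) (Fin n) ℂ) (hρ : ρ.PosSemidef) (htr : ρ.trace = 1) :
    ∃ ψ : Fin n → ℂ, (∑ i, Complex.normSq (ψ i)) = 1 ∧
      (((star ψ ⬝ᵥ ((A ^ 2) *ᵥ ψ)) - (star ψ ⬝ᵥ (A *ᵥ ψ)) ^ 2)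
        + ((star ψ ⬝ᵥ ((B ^ 2) *ᵥ ψ)) - (star ψ ⬝ᵥ (B *ᵥ ψ)) ^ 2)).re
      ≤ (((A ^ 2 * ρ).trace - ((A * ρ).trace) ^ 2)
        + ((B ^ 2 * ρ).trace - ((B * ρ).trace) ^ 2)).re := by
  set l := hρ.1.eigenvalues with hl
  set v : Fin n → Fin n → ℂ := fun i => ⇑(hρ.1.eigenvectorBasis i) with hv
  have hunit : ∀ i, (∑ j, Complex.normSq (v i j)) = 1 := fun i => basis_unit n hρ.1 i
  have hl0 : ∀ i, 0 ≤ l i := fun i => hρ.eigenvalues_nonneg i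
  have hlsum : ∑ i, l i = 1 := by
    have h1 := trace_decomp n ρ 1 hρ
    rw [one_mul, htr] at h1
    have hv1 : ∀ i, star (v i) ⬝ᵥ (1 : Matrix (Fin n) (Fin n) ℂ) *ᵥ (v i) = 1 := by
      intro i
      rw [one_mulVec, dotProduct]
      have : ∀ j, star (v i) j * v i j = (Complex.normSq (v i j) : ℂ) := by
        intro j; simp [Complex.normSq_eq_conj_mul_self, Complex.star_def]
      simp only [this]
      norm_cast
      exact hunit i
    simp only [hv] at hv1; simp only [hv1, mul_one] at h1
    have := congrArg Complex.re h1
    simpa using this.symm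
  -- real quadratic forms
  set aA : Fin n → ℝ := fun i => (star (v i) ⬝ᵥ A *ᵥ (v i)).re with haA
  set aB : Fin n → ℝ := fun i => (star (v i) ⬝ᵥ B *ᵥ (v i)).re with haB
  set cA : Fin n → ℝ := fun i => (star (v i) ⬝ᵥ (A^2) *ᵥ (v i)).re with hcA
  set cB : Fin n → ℝ := fun i => (star (v i) ⬝ᵥ (B^2) *ᵥ (v i)).re with hcB
  have htA : (A * ρ).trace = ((∑ i, l i * aA i : ℝ) : ℂ) := by
    rw [trace_decomp n ρ A hρ]
    push_cast
    apply Finset.sum_congr rfl; intro i _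
    rw [qf_real n A hA (v i)]
  have htA2 : ((A^2) * ρ).trace = ((∑ i, l i * cA i : ℝ) : ℂ) := by
    rw [trace_decomp n ρ (A^2) hρ]
    push_cast
    apply Finset.sum_congr rfl; intro i _
    rw [qf_real n (A^2) hA2 (v i)]
  have htB : (B * ρ).trace = ((∑ i, l i * aB i : ℝ) : ℂ) := by
    rw [trace_decomp n ρ B hρ]
    push_cast
    apply Finset.sum_congr rfl; intro i _
    rw [qf_real n B hB (v i)]
  have htB2 : ((B^2) * ρ).trace = ((∑ i, l i * cB i : ℝ) : ℂ) := by
    rw [trace_decomp n ρ (B^2) hρ]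
    push_cast
    apply Finset.sum_congr rfl; intro i _
    rw [qf_real n (B^2) hB2 (v i)]
  have hval : (((A ^ 2 * ρ).trace - ((A * ρ).trace) ^ 2)
        + ((B ^ 2 * ρ).trace - ((B * ρ).trace) ^ 2)).re
      = ((∑ i, l i * cA i) - (∑ i, l i * aA i)^2)
        + ((∑ i, l i * cB i) - (∑ i, l i * aB i)^2) := by
    rw [htA, htA2, htB, htB2]
    push_cast
    norm_cast
  set g : Fin n → ℝ := fun i => (cA i - (aA i)^2) + (cB i - (aB i)^2) with hg
  have hlow : ∑ i, l i * g i ≤ (((A ^ 2 * ρ).trace - ((A * ρ).trace) ^ 2)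
        + ((B ^ 2 * ρ).trace - ((B * ρ).trace) ^ 2)).re := by
    rw [hval]
    have e : ∑ i, l i * g i = ((∑ i, l i * cA i) - (∑ i, l i * (aA i)^2))
        + ((∑ i, l i * cB i) - (∑ i, l i * (aB i)^2)) := by
      rw [← Finset.sum_sub_distrib, ← Finset.sum_sub_distrib, ← Finset.sum_add_distrib]
      apply Finset.sum_congr rfl; intro i _
      simp [hg]; ring
    rw [e]
    have jA := jensen n l aA hl0 hlsum
    have jB := jensen n l aB hl0 hlsum
    gcongr
  obtain ⟨i0, -, hi0⟩ := Finset.exists_min_image Finset.univ g ⟨⟨0, hn⟩, Finset.mem_univ _⟩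
  have hmin : g i0 ≤ ∑ i, l i * g i := by
    calc g i0 = ∑ i, l i * g i0 := by rw [← Finset.sum_mul, hlsum, one_mul]
      _ ≤ ∑ i, l i * g i := by
          apply Finset.sum_le_sum; intro i _
          exact mul_le_mul_of_nonneg_left (hi0 i (Finset.mem_univ i)) (hl0 i)
  refine ⟨v i0, hunit i0, ?_⟩
  have hpv : (((star (v i0) ⬝ᵥ ((A ^ 2) *ᵥ (v i0))) - (star (v i0) ⬝ᵥ (A *ᵥ (v i0))) ^ 2)
        + ((star (v i0) ⬝ᵥ ((B ^ 2) *ᵥ (v i0))) - (star (v i0) ⬝ᵥ (B *ᵥ (v i0))) ^ 2)).re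
      = g i0 :=
    val_re _ _ _ _ (qf_im n A hA (v i0)) (qf_im n B hB (v i0))
  rw [hpv]
  exact hmin.trans hlow
private lemma pure_psd (n : ℕ) (ψ : Fin n → ℂ) : (vecMulVec ψ (star ψ)).PosSemidef := by
  have : vecMulVec ψ (star ψ) = (Matrix.replicateCol Unit ψ) * (Matrix.replicateCol Unit ψ)ᴴ := by
    rw [vecMulVec_eq Unit, conjTranspose_replicateCol]
  rw [this]
  exact posSemidef_self_mul_conjTranspose _

private lemma pure_trace (n : ℕ) (ψ : Fin n → ℂ) (hψ : (∑ i, Complex.normSq (ψ i)) = 1) :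
    (vecMulVec ψ (star ψ)).trace = 1 := by
  rw [Matrix.trace]
  have : ∀ i, (vecMulVec ψ (star ψ)).diag i = (Complex.normSq (ψ i) : ℂ) := by
    intro i
    simp [vecMulVec_apply, Complex.mul_conj]
  simp only [this]
  norm_cast

private lemma pure_tr_eq (n : ℕ) (X : Matrix (Fin n) (Fin n) ℂ) (ψ : Fin n → ℂ) :
    (X * vecMulVec ψ (star ψ)).trace = star ψ ⬝ᵥ X *ᵥ ψ := by
  rw [Matrix.trace]
  simp only [Matrix.diag_apply, Matrix.mul_apply, vecMulVec_apply, dotProduct, mulVec,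
    Pi.star_apply, Finset.mul_sum]
  apply Finset.sum_congr rfl; intro j _
  apply Finset.sum_congr rfl; intro k _
  ring

private lemma var_key (n : ℕ) (X : Matrix (Fin n) (Fin n) ℂ) (hX : X.IsHermitian) (ψ : Fin n → ℂ)
    (hψ : (∑ i, Complex.normSq (ψ i)) = 1) :
    ((star ψ ⬝ᵥ X *ᵥ ψ).re)^2 ≤ (star ψ ⬝ᵥ (X^2) *ᵥ ψ).re := by
  set w := X *ᵥ ψ with hw
  have h1 : star ψ ⬝ᵥ (X^2) *ᵥ ψ = star w ⬝ᵥ w := by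
    rw [pow_two, ← mulVec_mulVec, dotProduct_mulVec]
    congr 1
    rw [hw, star_mulVec, hX.eq]
  set ψ' : EuclideanSpace ℂ (Fin n) := (WithLp.equiv 2 (Fin n → ℂ)).symm ψ with hψ'
  set w' : EuclideanSpace ℂ (Fin n) := (WithLp.equiv 2 (Fin n → ℂ)).symm w with hw'
  have hinner : (inner ℂ ψ' w' : ℂ) = star ψ ⬝ᵥ w := by
    rw [EuclideanSpace.inner_eq_star_dotProduct]; exact dotProduct_comm _ _
  have hinner2 : (inner ℂ w' w' : ℂ) = star w ⬝ᵥ w := by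
    rw [EuclideanSpace.inner_eq_star_dotProduct]; exact dotProduct_comm _ _
  have hwn : star w ⬝ᵥ w = ((‖w'‖^2 : ℝ) : ℂ) := by
    rw [← hinner2, inner_self_eq_norm_sq_to_K]; norm_cast
  have hψn : ‖ψ'‖ = 1 := by
    have h0 : ψ' = (WithLp.equiv 2 (Fin n → ℂ)).symm ψ := hψ'
    rw [h0, EuclideanSpace.norm_eq]
    have : ∀ i, ‖ψ i‖^2 = Complex.normSq (ψ i) := by
      intro i; rw [Complex.normSq_eq_norm_sq]
    simp only [WithLp.equiv_symm_apply, WithLp.ofLp_toLp, this, hψ, Real.sqrt_one]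
  have hcs : ‖(inner ℂ ψ' w' : ℂ)‖ ≤ ‖w'‖ := by
    calc ‖(inner ℂ ψ' w' : ℂ)‖ ≤ ‖ψ'‖ * ‖w'‖ := norm_inner_le_norm ψ' w'
      _ = ‖w'‖ := by rw [hψn, one_mul]
  have hre : |(star ψ ⬝ᵥ w).re| ≤ ‖w'‖ := by
    rw [← hinner]
    exact le_trans (Complex.abs_re_le_norm _) hcs
  calc ((star ψ ⬝ᵥ X *ᵥ ψ).re)^2 = |(star ψ ⬝ᵥ w).re|^2 := by rw [sq_abs]
    _ ≤ ‖w'‖^2 := by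
        apply pow_le_pow_left₀ (abs_nonneg _) hre
    _ = (star ψ ⬝ᵥ (X^2) *ᵥ ψ).re := by rw [h1, hwn, Complex.ofReal_re]

open Matrix ComplexOrder in
theorem stmt_9 (n : ℕ) (hn : 1 ≤ n)
    (A B : Matrix (Fin n) (Fin n) ℂ)
    (hA : A.IsHermitian) (hB : B.IsHermitian) :
    sInf {x : ℝ | ∃ ρ : Matrix (Fin n) (Fin n) ℂ,
        ρ.PosSemidef ∧ ρ.trace = 1 ∧
        x = (((A ^ 2 * ρ).trace - ((A * ρ).trace) ^ 2)
              + ((B ^ 2 * ρ).trace - ((B * ρ).trace) ^ 2)).re}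
      = sInf {x : ℝ | ∃ ψ : Fin n → ℂ,
          (∑ i, Complex.normSq (ψ i)) = 1 ∧
          x = (((star ψ ⬝ᵥ ((A ^ 2) *ᵥ ψ)) - (star ψ ⬝ᵥ (A *ᵥ ψ)) ^ 2)
                + ((star ψ ⬝ᵥ ((B ^ 2) *ᵥ ψ)) - (star ψ ⬝ᵥ (B *ᵥ ψ)) ^ 2)).re} := by
  have hA2 : (A ^ 2).IsHermitian := by
    show (A^2)ᴴ = A^2
    rw [pow_two, conjTranspose_mul, hA.eq, ← pow_two]
  have hB2 : (B ^ 2).IsHermitian := by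
    show (B^2)ᴴ = B^2
    rw [pow_two, conjTranspose_mul, hB.eq, ← pow_two]
  set SD := {x : ℝ | ∃ ρ : Matrix (Fin n) (Fin n) ℂ,
        ρ.PosSemidef ∧ ρ.trace = 1 ∧
        x = (((A ^ 2 * ρ).trace - ((A * ρ).trace) ^ 2)
              + ((B ^ 2 * ρ).trace - ((B * ρ).trace) ^ 2)).re} with hSD
  set SP := {x : ℝ | ∃ ψ : Fin n → ℂ,
          (∑ i, Complex.normSq (ψ i)) = 1 ∧
          x = (((star ψ ⬝ᵥ ((A ^ 2) *ᵥ ψ)) - (star ψ ⬝ᵥ (A *ᵥ ψ)) ^ 2)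
                + ((star ψ ⬝ᵥ ((B ^ 2) *ᵥ ψ)) - (star ψ ⬝ᵥ (B *ᵥ ψ)) ^ 2)).re} with hSP
  have hsub : SP ⊆ SD := by
    rintro x ⟨ψ, hψ, rfl⟩
    exact ⟨vecMulVec ψ (star ψ), pure_psd n ψ, pure_trace n ψ hψ,
      by rw [pure_tr_eq, pure_tr_eq, pure_tr_eq, pure_tr_eq]⟩
  have hPnonneg : ∀ x ∈ SP, (0:ℝ) ≤ x := by
    rintro x ⟨ψ, hψ, rfl⟩
    rw [val_re _ _ _ _ (qf_im n A hA ψ) (qf_im n B hB ψ)]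
    have h1 := var_key n A hA ψ hψ
    have h2 := var_key n B hB ψ hψ
    have := add_le_add h1 h2
    linarith
  have hPne : SP.Nonempty := by
    refine ⟨_, ⟨Pi.single ⟨0, hn⟩ 1, ?_, rfl⟩⟩
    rw [Finset.sum_eq_single (⟨0, hn⟩ : Fin n)]
    · simp
    · intro b _ hb; rw [Pi.single_eq_of_ne hb]; simp
    · intro h; exact absurd (Finset.mem_univ _) h
  have hkey : ∀ x ∈ SD, ∃ y ∈ SP, y ≤ x := by
    rintro x ⟨ρ, hρ, htr, rfl⟩
    obtain ⟨ψ, hψ, hle⟩ := key_lemma n hn A B hA hB hA2 hB2 ρ hρ htr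
    exact ⟨_, ⟨ψ, hψ, rfl⟩, hle⟩
  have hbddP : BddBelow SP := ⟨0, hPnonneg⟩
  have hbddD : BddBelow SD := by
    refine ⟨0, fun x hx => ?_⟩
    obtain ⟨y, hy, hyx⟩ := hkey x hx
    exact le_trans (hPnonneg y hy) hyx
  have hDne : SD.Nonempty := ⟨_, hsub hPne.choose_spec⟩
  apply le_antisymm
  · exact csInf_le_csInf hbddD hPne hsub
  · apply le_csInf hDne
    intro x hx
    obtain ⟨y, hy, hyx⟩ := hkey x hx
    exact (csInf_le hbddP hy).trans hyx
end

section
/- Let σ₁ = [[0,1],[1,0]], σ₂ = [[0,−i],[i,0]], σ₃ = [[1,0],[0,−1]] be the Pauli matrices. Given a₀, b₀ ∈ ℝ and a, b ∈ ℝ³, set A = a₀I + ∑_{k=1}^{3} a_k σ_k and B = b₀I + ∑_{k=1}^{3} b_k σ_k, and let O = a aᵀ + b bᵀ, a 3×3 real symmetric matrix, with largest eigenvalue λ_max(O). Then ‖a‖² + ‖b‖² − λ_max(O) is the minimum over all 2×2 density matrices ρ of var_ρ(A) + var_ρ(B): var_ρ(A) + var_ρ(B) ≥ ‖a‖² + ‖b‖²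 − λ_max(O) for every density matrix ρ, and equality is attained for some density matrix. -/
open Matrix

lemma root_le (t d s x : ℝ) (hs : 0 ≤ s) (hs2 : s^2 = t^2 - 4*d) (hx : x^2 - t*x + d = 0) :
    x ≤ (t + s)/2 := by nlinarith [sq_nonneg (2*x - t - s), sq_nonneg (2*x - t + s)]


lemma cs3' (u0 u1 u2 r0 r1 r2 : ℝ) :
    (u0*r0+u1*r1+u2*r2)^2 ≤ (u0^2+u1^2+u2^2)*(r0^2+r1^2+r2^2) := by
  nlinarith [sq_nonneg (u0*r1 - u1*r0), sq_nonneg (u0*r2 - u2*r0), sq_nonneg (u1*r2 - u2*r1)]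

lemma quad2 (α β γ s c d : ℝ) (hs : 0 ≤ s) (hs2 : s^2 = (α-β)^2 + 4*γ^2) :
    2*(α*c^2 + 2*γ*c*d + β*d^2) ≤ (α+β+s)*(c^2+d^2) := by
  have key : (s*(c^2+d^2))^2 - ((α-β)*(c^2-d^2) + 4*γ*c*d)^2
      = ((α-β)*(2*c*d) - 2*γ*(c^2-d^2))^2 := by
    linear_combination (c^2+d^2)^2 * hs2
  have hL : ((α-β)*(c^2-d^2) + 4*γ*c*d)^2 ≤ (s*(c^2+d^2))^2 := by
    nlinarith [sq_nonneg ((α-β)*(2*c*d) - 2*γ*(c^2-d^2))]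
  have hR : 0 ≤ s*(c^2+d^2) := mul_nonneg hs (by positivity)
  nlinarith [hL, hR]

lemma ray_core (α β γ s c d R : ℝ) (hs : 0 ≤ s) (hs2 : s^2 = (α-β)^2 + 4*γ^2)
    (hα0 : 0 ≤ α) (hβ0 : 0 ≤ β) (hR1 : R ≤ 1) (hR0 : 0 ≤ R)
    (hG0 : 0 ≤ α*c^2+2*γ*c*d+β*d^2)
    (hCS : (c^2+d^2)^2 ≤ (α*c^2+2*γ*c*d+β*d^2)*R) :
    c^2+d^2 ≤ (α+β+s)/2 := by
  have h2 := quad2 α β γ s c d hs hs2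
  have h3 : (c^2+d^2)^2 ≤ ((α+β+s)/2)*(c^2+d^2) := by nlinarith
  have hμ0 : 0 ≤ (α+β+s)/2 := by linarith
  nlinarith [h3, hμ0, sq_nonneg (c^2+d^2)]

lemma rayleigh' (a0 a1 a2 b0 b1 b2 r0 r1 r2 s : ℝ) (hs : 0 ≤ s)
    (hs2 : s^2 = (a0^2+a1^2+a2^2 - (b0^2+b1^2+b2^2))^2 + 4*(a0*b0+a1*b1+a2*b2)^2)
    (hr : r0^2+r1^2+r2^2 ≤ 1) :
    (a0*r0+a1*r1+a2*r2)^2 + (b0*r0+b1*r1+b2*r2)^2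
      ≤ (a0^2+a1^2+a2^2 + (b0^2+b1^2+b2^2) + s)/2 := by
  have hc : ∃ c, c = a0*r0+a1*r1+a2*r2 := ⟨_, rfl⟩
  have hd : ∃ d, d = b0*r0+b1*r1+b2*r2 := ⟨_, rfl⟩
  obtain ⟨c, hc⟩ := hc
  obtain ⟨d, hd⟩ := hd
  rw [← hc, ← hd]
  apply ray_core (a0^2+a1^2+a2^2) (b0^2+b1^2+b2^2) (a0*b0+a1*b1+a2*b2) s
    c d (r0^2+r1^2+r2^2) hs hs2 (by positivity) (by positivity) hr (by positivity)
  · have hGeq : (a0^2+a1^2+a2^2)*c^2+2*(a0*b0+a1*b1+a2*b2)*c*d+(b0^2+b1^2+b2^2)*d^2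
        = (c*a0+d*b0)^2+(c*a1+d*b1)^2+(c*a2+d*b2)^2 := by ring
    rw [hGeq]; positivity
  · have h1 : c^2+d^2 = (c*a0+d*b0)*r0+(c*a1+d*b1)*r1+(c*a2+d*b2)*r2 := by
      rw [hc, hd]; ring
    have hGeq : (a0^2+a1^2+a2^2)*c^2+2*(a0*b0+a1*b1+a2*b2)*c*d+(b0^2+b1^2+b2^2)*d^2
        = (c*a0+d*b0)^2+(c*a1+d*b1)^2+(c*a2+d*b2)^2 := by ring
    rw [hGeq]
    calc (c^2+d^2)^2 = ((c*a0+d*b0)*r0+(c*a1+d*b1)*r1+(c*a2+d*b2)*r2)^2 := by rw [← h1]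
    _ ≤ _ := cs3' _ _ _ _ _ _

open ComplexOrder in
lemma bloch_psd (p q x y : ℝ) (h1 : p + q = 1) (hd : x^2+y^2 ≤ p*q) :
    (!![(p:ℂ), (x:ℂ)+(y:ℂ)*Complex.I; (x:ℂ)-(y:ℂ)*Complex.I, (q:ℂ)]).PosSemidef := by
  have hp : 0 ≤ p := by nlinarith [sq_nonneg x, sq_nonneg y]
  have hq : 0 ≤ q := by nlinarith [sq_nonneg x, sq_nonneg y]
  rw [Matrix.posSemidef_iff_dotProduct_mulVec]
  constructor
  · ext i j
    fin_cases i <;> fin_cases j <;>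
      simp [Matrix.conjTranspose_apply, Complex.ext_iff]
  · intro z
    simp only [dotProduct, Matrix.mulVec, Fin.sum_univ_two, Pi.star_apply,
      Matrix.cons_val', Matrix.cons_val_zero, Matrix.cons_val_one, Matrix.head_cons,
      Matrix.empty_val', Matrix.cons_val_fin_one, Matrix.head_fin_const, Matrix.of_apply,
      Matrix.cons_val_zero, Matrix.cons_val_one]
    rw [Complex.le_def]
    constructor
    · simp only [Complex.add_re, Complex.mul_re, Complex.sub_re, Complex.add_im,
        Complex.mul_im, Complex.sub_im, Complex.ofReal_re, Complex.ofReal_im,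
        Complex.I_re, Complex.I_im, Complex.zero_re, Complex.conj_re, Complex.conj_im,
        RCLike.star_def]
      nlinarith [sq_nonneg (p*(z 0).re + x*(z 1).re - y*(z 1).im),
        sq_nonneg (p*(z 0).im + x*(z 1).im + y*(z 1).re),
        sq_nonneg (q*(z 1).re + x*(z 0).re + y*(z 0).im),
        sq_nonneg (q*(z 1).im + x*(z 0).im - y*(z 0).re),
        mul_nonneg (by nlinarith : (0:ℝ) ≤ p*q - x^2 - y^2) (sq_nonneg ((z 0).re)),
        mul_nonneg (by nlinarith : (0:ℝ) ≤ p*q - x^2 - y^2) (sq_nonneg ((z 0).im)),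
        mul_nonneg (by nlinarith : (0:ℝ) ≤ p*q - x^2 - y^2) (sq_nonneg ((z 1).re)),
        mul_nonneg (by nlinarith : (0:ℝ) ≤ p*q - x^2 - y^2) (sq_nonneg ((z 1).im))]
    · simp only [Complex.add_re, Complex.mul_re, Complex.sub_re, Complex.add_im,
        Complex.mul_im, Complex.sub_im, Complex.ofReal_re, Complex.ofReal_im,
        Complex.I_re, Complex.I_im, Complex.zero_im, Complex.conj_re, Complex.conj_im,
        RCLike.star_def]
      ring

open ComplexOrder in
lemma extract (ρ : Matrix (Fin 2) (Fin 2) ℂ) (hpsd : ρ.PosSemidef) (htr : ρ.trace = 1) :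
    ∃ p q x y : ℝ, p + q = 1 ∧ x^2 + y^2 ≤ p*q ∧
      ρ = !![(p:ℂ), (x:ℂ)+(y:ℂ)*Complex.I; (x:ℂ)-(y:ℂ)*Complex.I, (q:ℂ)] := by
  obtain ⟨hherm, hform⟩ := Matrix.posSemidef_iff_dotProduct_mulVec.mp hpsd
  set p := (ρ 0 0).re with hp
  set q := (ρ 1 1).re with hq
  set x := (ρ 0 1).re with hx
  set y := (ρ 0 1).im with hy
  have e00 : ρ 0 0 = (p : ℂ) := by
    have h := congrFun (congrFun hherm 0) 0
    rw [Matrix.conjTranspose_apply] at h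
    rw [hp]; exact ((Complex.conj_eq_iff_re).1 h).symm
  have e11 : ρ 1 1 = (q : ℂ) := by
    have h := congrFun (congrFun hherm 1) 1
    rw [Matrix.conjTranspose_apply] at h
    rw [hq]; exact ((Complex.conj_eq_iff_re).1 h).symm
  have e01 : ρ 0 1 = (x:ℂ) + (y:ℂ)*Complex.I := (Complex.re_add_im _).symm
  have e10 : ρ 1 0 = (x:ℂ) - (y:ℂ)*Complex.I := by
    have h := congrFun (congrFun hherm 1) 0
    rw [Matrix.conjTranspose_apply] at h
    rw [← h, e01]
    simp [Complex.ext_iff]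
  have hrep : ρ = !![(p:ℂ), (x:ℂ)+(y:ℂ)*Complex.I; (x:ℂ)-(y:ℂ)*Complex.I, (q:ℂ)] := by
    rw [Matrix.eta_fin_two ρ, e00, e01, e10, e11]
  have htr' : p + q = 1 := by
    rw [Matrix.trace_fin_two, e00, e11, ← Complex.ofReal_add] at htr
    exact_mod_cast htr
  refine ⟨p, q, x, y, htr', ?_, hrep⟩
  have h1 := hform ![-(ρ 0 1), (ρ 0 0)]
  have h2 := hform ![(ρ 1 1), -(ρ 1 0)]
  rw [hrep] at h1 h2
  simp only [dotProduct, Matrix.mulVec, Fin.sum_univ_two, Pi.star_apply,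
    Matrix.cons_val', Matrix.cons_val_zero, Matrix.cons_val_one, Matrix.head_cons,
    Matrix.empty_val', Matrix.cons_val_fin_one, Matrix.head_fin_const, Matrix.of_apply,
    e00, e01, e10, e11, Complex.le_def] at h1 h2
  obtain ⟨h1re, -⟩ := h1
  obtain ⟨h2re, -⟩ := h2
  simp only [Complex.add_re, Complex.mul_re, Complex.sub_re, Complex.add_im,
    Complex.mul_im, Complex.sub_im, Complex.ofReal_re, Complex.ofReal_im,
    Complex.I_re, Complex.I_im, Complex.zero_re, Complex.zero_im, Complex.neg_re,
    Complex.neg_im, Complex.conj_re, Complex.conj_im, RCLike.star_def, Complex.star_def] at h1re h2re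
  nlinarith [h1re, h2re, htr']

lemma value_lemma (a₀ b₀ : ℝ) (a b : Fin 3 → ℝ)
    (σ : Fin 3 → Matrix (Fin 2) (Fin 2) ℂ)
    (hσ0 : σ 0 = !![0, 1; 1, 0])
    (hσ1 : σ 1 = !![0, -Complex.I; Complex.I, 0])
    (hσ2 : σ 2 = !![1, 0; 0, -1])
    (A B : Matrix (Fin 2) (Fin 2) ℂ)
    (hA : A = (a₀ : ℂ) • (1 : Matrix (Fin 2) (Fin 2) ℂ) + ∑ k, (a k : ℂ) • σ k)
    (hB : B = (b₀ : ℂ) • (1 : Matrix (Fin 2) (Fin 2) ℂ) + ∑ k, (b k : ℂ) • σ k)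
    (p q x y : ℝ) (hpq : p + q = 1)
    (ρ : Matrix (Fin 2) (Fin 2) ℂ)
    (hρ : ρ = !![(p:ℂ), (x:ℂ)+(y:ℂ)*Complex.I; (x:ℂ)-(y:ℂ)*Complex.I, (q:ℂ)]) :
    (((A ^ 2 * ρ).trace - ((A * ρ).trace) ^ 2)
      + ((B ^ 2 * ρ).trace - ((B * ρ).trace) ^ 2)).re
    = (∑ k, a k^2) + (∑ k, b k^2)
      - ((a 0 * (2*x) + a 1 * (-2*y) + a 2 * (p-q))^2
         + (b 0 * (2*x) + b 1 * (-2*y) + b 2 * (p-q))^2) := by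
  have hA' : A = !![(a₀:ℂ)+(a 2:ℂ), (a 0:ℂ) - (a 1:ℂ)*Complex.I;
      (a 0:ℂ) + (a 1:ℂ)*Complex.I, (a₀:ℂ)-(a 2:ℂ)] := by
    rw [hA]; ext i j
    fin_cases i <;> fin_cases j <;>
      simp [Fin.sum_univ_three, hσ0, hσ1, hσ2, Matrix.one_apply] <;> ring
  have hB' : B = !![(b₀:ℂ)+(b 2:ℂ), (b 0:ℂ) - (b 1:ℂ)*Complex.I;
      (b 0:ℂ) + (b 1:ℂ)*Complex.I, (b₀:ℂ)-(b 2:ℂ)] := by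
    rw [hB]; ext i j
    fin_cases i <;> fin_cases j <;>
      simp [Fin.sum_univ_three, hσ0, hσ1, hσ2, Matrix.one_apply] <;> ring
  have h1 : q = 1 - p := by linarith
  subst h1
  rw [hA', hB', hρ]; simp only [pow_two]
  simp only [Matrix.mul_fin_two, Matrix.trace_fin_two_of]
  simp only [Complex.add_re, Complex.sub_re, Complex.mul_re, Complex.mul_im,
    Complex.add_im, Complex.sub_im, Complex.I_re, Complex.I_im,
    Complex.ofReal_re, Complex.ofReal_im, Complex.one_re, Complex.one_im,
    Fin.sum_univ_three]
  ring

set_option maxHeartbeats 1000000 in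
open Matrix ComplexOrder in
theorem stmt_10 (a₀ b₀ : ℝ) (a b : Fin 3 → ℝ)
    (σ : Fin 3 → Matrix (Fin 2) (Fin 2) ℂ)
    (hσ0 : σ 0 = !![0, 1; 1, 0])
    (hσ1 : σ 1 = !![0, -Complex.I; Complex.I, 0])
    (hσ2 : σ 2 = !![1, 0; 0, -1])
    (A B : Matrix (Fin 2) (Fin 2) ℂ)
    (hA : A = (a₀ : ℂ) • (1 : Matrix (Fin 2) (Fin 2) ℂ) + ∑ k, (a k : ℂ) • σ k)
    (hB : B = (b₀ : ℂ) • (1 : Matrix (Fin 2) (Fin 2) ℂ) + ∑ k, (b k : ℂ) • σ k)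
    (O : Matrix (Fin 3) (Fin 3) ℝ)
    (hO : ∀ i j, O i j = a i * a j + b i * b j)
    (lmax : ℝ) (hlmax : IsGreatest (spectrum ℝ O) lmax) :
    IsLeast {x : ℝ | ∃ ρ : Matrix (Fin 2) (Fin 2) ℂ,
        ρ.PosSemidef ∧ ρ.trace = 1 ∧
        x = (((A ^ 2 * ρ).trace - ((A * ρ).trace) ^ 2)
              + ((B ^ 2 * ρ).trace - ((B * ρ).trace) ^ 2)).re}
      ((∑ k, (a k) ^ 2) + (∑ k, (b k) ^ 2) - lmax) := by
  set α := a 0^2 + a 1^2 + a 2^2 with hα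
  set β := b 0^2 + b 1^2 + b 2^2 with hβ
  set γ := a 0*b 0 + a 1*b 1 + a 2*b 2 with hγ
  have hgoalα : (∑ k, (a k)^2) = α := by rw [hα, Fin.sum_univ_three]
  have hgoalβ : (∑ k, (b k)^2) = β := by rw [hβ, Fin.sum_univ_three]
  rw [hgoalα, hgoalβ]
  have hα0 : 0 ≤ α := by rw [hα]; positivity
  have hβ0 : 0 ≤ β := by rw [hβ]; positivity
  obtain ⟨s, hs, hs2⟩ : ∃ s : ℝ, 0 ≤ s ∧ s^2 = (α-β)^2 + 4*γ^2 :=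
    ⟨Real.sqrt _, Real.sqrt_nonneg _, Real.sq_sqrt (by positivity)⟩
  have hdet : ∀ x : ℝ, (x • (1 : Matrix (Fin 3) (Fin 3) ℝ) - O).det
      = x^3 - (α+β)*x^2 + (α*β - γ^2)*x := by
    intro x
    rw [Matrix.det_fin_three]
    simp [hO, hα, hβ, hγ, Matrix.one_apply]
    ring
  have hchar : ∀ x : ℝ, x ∈ spectrum ℝ O ↔ x^3 - (α+β)*x^2 + (α*β - γ^2)*x = 0 := by
    intro x
    rw [spectrum.mem_iff, Matrix.isUnit_iff_isUnit_det, isUnit_iff_ne_zero, not_ne_iff,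
      Algebra.algebraMap_eq_smul_one, hdet x]
  have hub : ∀ z ∈ spectrum ℝ O, z ≤ (α+β+s)/2 := by
    intro z hz
    have E2 : z*(z^2 - (α+β)*z + (α*β - γ^2)) = 0 := by linear_combination (hchar z).1 hz
    rcases mul_eq_zero.1 E2 with h|h
    · rw [h]; linarith
    · exact root_le (α+β) (α*β - γ^2) s z hs (by linear_combination hs2) h
  have hμmem : (α+β+s)/2 ∈ spectrum ℝ O :=
    (hchar _).2 (by linear_combination ((α+β+s)/8)*hs2)
  have hlm : lmax = (α+β+s)/2 := le_antisymm (hub lmax hlmax.1) (hlmax.2 hμmem)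
  constructor
  · -- membership: construct optimal ρ from eigenvector
    have hdet0 : (lmax • (1 : Matrix (Fin 3) (Fin 3) ℝ) - O).det = 0 := by
      rw [hdet lmax]; exact (hchar lmax).1 hlmax.1
    obtain ⟨v, hv0, hveq⟩ := (Matrix.exists_mulVec_eq_zero_iff).2 hdet0
    have hOv : O *ᵥ v = lmax • v := by
      rw [Matrix.sub_mulVec, sub_eq_zero] at hveq
      rw [← hveq, Matrix.smul_mulVec, Matrix.one_mulVec]
    have hvpos : 0 < v 0^2 + v 1^2 + v 2^2 := by
      rcases (show (0:ℝ) ≤ v 0^2 + v 1^2 + v 2^2 by positivity).lt_or_eq with h|h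
      · exact h
      · exfalso; apply hv0
        have e0 : v 0 = 0 := by nlinarith [sq_nonneg (v 0), sq_nonneg (v 1), sq_nonneg (v 2)]
        have e1 : v 1 = 0 := by nlinarith [sq_nonneg (v 0), sq_nonneg (v 1), sq_nonneg (v 2)]
        have e2 : v 2 = 0 := by nlinarith [sq_nonneg (v 0), sq_nonneg (v 1), sq_nonneg (v 2)]
        funext i; fin_cases i <;> simp [e0, e1, e2]
    obtain ⟨n, hn, hn2⟩ : ∃ n : ℝ, 0 < n ∧ n^2 = v 0^2 + v 1^2 + v 2^2 :=
      ⟨Real.sqrt _, Real.sqrt_pos.2 hvpos, Real.sq_sqrt hvpos.le⟩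
    have hne : n ≠ 0 := ne_of_gt hn
    have h0 := congrFun hOv 0
    have h1 := congrFun hOv 1
    have h2 := congrFun hOv 2
    simp only [Matrix.mulVec, dotProduct, Fin.sum_univ_three, hO, Pi.smul_apply,
      smul_eq_mul] at h0 h1 h2
    obtain ⟨m, hm⟩ : ∃ m : ℝ, n*m = 1 := ⟨n⁻¹, mul_inv_cancel₀ hne⟩
    have hu : (v 0*m)^2 + (v 1*m)^2 + (v 2*m)^2 = 1 := by
      linear_combination (-(m^2))*hn2 + (n*m+1)*hm
    have eig : (a 0*(v 0*m) + a 1*(v 1*m) + a 2*(v 2*m))^2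
        + (b 0*(v 0*m) + b 1*(v 1*m) + b 2*(v 2*m))^2 = lmax := by
      linear_combination (m^2*(v 0))*h0 + (m^2*(v 1))*h1 + (m^2*(v 2))*h2 + lmax*hu
    refine ⟨!![(((1+(v 2*m))/2 : ℝ) : ℂ),
        ((v 0*m/2 : ℝ):ℂ) + ((-(v 1*m)/2 : ℝ):ℂ)*Complex.I;
        ((v 0*m/2 : ℝ):ℂ) - ((-(v 1*m)/2 : ℝ):ℂ)*Complex.I, (((1-(v 2*m))/2 : ℝ):ℂ)],
      bloch_psd _ _ _ _ (by ring) (by nlinarith [hu]), ?_, ?_⟩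
    · simp only [Matrix.trace_fin_two_of]
      push_cast
      ring
    · rw [value_lemma a₀ b₀ a b σ hσ0 hσ1 hσ2 A B hA hB ((1+(v 2*m))/2) ((1-(v 2*m))/2)
        (v 0*m/2) (-(v 1*m)/2) (by ring) _ rfl]
      rw [hgoalα, hgoalβ]
      linear_combination eig
  · -- lower bound
    rintro w ⟨ρ, hpsd, htr, rfl⟩
    obtain ⟨p, q, x, y, hpq, hdq, hrep⟩ := extract ρ hpsd htr
    rw [value_lemma a₀ b₀ a b σ hσ0 hσ1 hσ2 A B hA hB p q x y hpq ρ hrep]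
    rw [hgoalα, hgoalβ, hlm]
    have hp0 : 0 ≤ p := by nlinarith [sq_nonneg x, sq_nonneg y]
    have hq0 : 0 ≤ q := by nlinarith [sq_nonneg x, sq_nonneg y]
    have hrle : (2*x)^2 + (-2*y)^2 + (p-q)^2 ≤ 1 := by nlinarith
    have hray := rayleigh' (a 0) (a 1) (a 2) (b 0) (b 1) (b 2) (2*x) (-2*y) (p-q) s hs
      (by rw [hα, hβ, hγ] at hs2; linear_combination hs2) hrle
    rw [hα, hβ]
    linarith [hray]
end

section
/- Let σ₁ = [[0,1],[1,0]], σ₂ = [[0,−i],[i,0]], σ₃ = [[1,0],[0,−1]] be the Pauli matrices. Given K qubit observables A_μ = a₀^{(μ)}I + ∑_{k=1}^{3} (a_μ)_k σ_k for μ = 1,…,K, with a₀^{(μ)} ∈ ℝ and a_μ ∈ ℝ³, let O = ∑_{μ=1}^{K} a_μ a_μᵀ, a 3×3 real symmetric positive semidefinite matrix with largest eigenvalue λ_max(O). Then Tr(O) − λ_max(O) is the minimum over all 2×2 density matrices ρ of ∑_{μ=1}^{K} var_ρ(A_μ): the sum of variances is at least Tr(O) − λ_max(O) for every density matrix ρ,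 and equality is attained for some density matrix. -/
open Matrix in
private lemma pauli_core (c b0 b1 b2 p q x y : ℝ) (hpq : p + q = 1) :
    ((( !![(c:ℂ)+b2, b0 - Complex.I*b1; (b0:ℂ) + Complex.I*b1, (c:ℂ)-b2] ^ 2
      * !![(p:ℂ), (x:ℂ)+y*Complex.I; (x:ℂ)-y*Complex.I, (q:ℂ)]).trace
     - ((!![(c:ℂ)+b2, b0 - Complex.I*b1; (b0:ℂ) + Complex.I*b1, (c:ℂ)-b2]
      * !![(p:ℂ), (x:ℂ)+y*Complex.I; (x:ℂ)-y*Complex.I, (q:ℂ)]).trace)^2)).re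
    = (b0^2+b1^2+b2^2) - (b0*(2*x) + b1*(-2*y) + b2*(p-q))^2 := by
  have hq : q = 1 - p := by linarith
  subst hq
  rw [pow_two, pow_two]
  simp only [Matrix.mul_fin_two, Matrix.trace_fin_two_of]
  have h2 : Complex.I^2 = -1 := Complex.I_sq
  have h4 : Complex.I^4 = 1 := by rw [show (4:ℕ)=2*2 from rfl, pow_mul, h2]; ring
  push_cast
  ring_nf
  rw [h2, h4]
  ring_nf
  norm_cast
  ring

open Matrix ComplexOrder in
theorem stmt_11 (K : ℕ) (a₀ : Fin K → ℝ) (a : Fin K → Fin 3 → ℝ)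
    (σ : Fin 3 → Matrix (Fin 2) (Fin 2) ℂ)
    (hσ0 : σ 0 = !![0, 1; 1, 0])
    (hσ1 : σ 1 = !![0, -Complex.I; Complex.I, 0])
    (hσ2 : σ 2 = !![1, 0; 0, -1])
    (A : Fin K → Matrix (Fin 2) (Fin 2) ℂ)
    (hA : ∀ μ, A μ = (a₀ μ : ℂ) • (1 : Matrix (Fin 2) (Fin 2) ℂ)
        + ∑ k, (a μ k : ℂ) • σ k)
    (O : Matrix (Fin 3) (Fin 3) ℝ)
    (hO : ∀ i j, O i j = ∑ μ, a μ i * a μ j)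
    (lmax : ℝ) (hlmax : IsGreatest (spectrum ℝ O) lmax) :
    IsLeast {x : ℝ | ∃ ρ : Matrix (Fin 2) (Fin 2) ℂ,
        ρ.PosSemidef ∧ ρ.trace = 1 ∧
        x = (∑ μ, ((A μ ^ 2 * ρ).trace - ((A μ * ρ).trace) ^ 2)).re}
      (O.trace - lmax) := by
  -- explicit form of A μ
  have hAexp : ∀ μ, A μ = !![(a₀ μ : ℂ) + a μ 2, (a μ 0 : ℂ) - Complex.I * a μ 1;
      (a μ 0 : ℂ) + Complex.I * a μ 1, (a₀ μ : ℂ) - a μ 2] := by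
    intro μ
    rw [hA μ, Fin.sum_univ_three, hσ0, hσ1, hσ2]
    ext i j
    fin_cases i <;> fin_cases j <;>
      simp [Matrix.one_apply] <;> ring
  -- trace of O
  have hOtr : O.trace = ∑ μ, (a μ 0 ^ 2 + a μ 1 ^ 2 + a μ 2 ^ 2) := by
    rw [Matrix.trace, Fin.sum_univ_three]
    simp only [Matrix.diag_apply, hO]
    rw [← Finset.sum_add_distrib, ← Finset.sum_add_distrib]
    exact Finset.sum_congr rfl fun μ _ => by ring
  -- key value identity
  have key : ∀ ρ : Matrix (Fin 2) (Fin 2) ℂ, ρ.IsHermitian → ρ.trace = 1 →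
      (∑ μ, ((A μ ^ 2 * ρ).trace - ((A μ * ρ).trace) ^ 2)).re
      = O.trace - ∑ μ, (a μ 0 * (2*(ρ 0 1).re) + a μ 1 * (-2*(ρ 0 1).im)
          + a μ 2 * ((ρ 0 0).re - (ρ 1 1).re))^2 := by
    intro ρ hherm htr
    have h00 : ρ 0 0 = ((ρ 0 0).re : ℂ) := (hherm.coe_re_apply_self 0).symm
    have h11 : ρ 1 1 = ((ρ 1 1).re : ℂ) := (hherm.coe_re_apply_self 1).symm
    have h01 : ρ 0 1 = ((ρ 0 1).re : ℂ) + ((ρ 0 1).im : ℝ) * Complex.I :=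
      (Complex.re_add_im _).symm
    have h10 : ρ 1 0 = ((ρ 0 1).re : ℂ) - ((ρ 0 1).im : ℝ) * Complex.I := by
      rw [← hherm.apply 1 0]
      simp [Complex.ext_iff]
    have hρ : ρ = !![((ρ 0 0).re : ℂ), ((ρ 0 1).re : ℂ) + ((ρ 0 1).im : ℝ) * Complex.I;
        ((ρ 0 1).re : ℂ) - ((ρ 0 1).im : ℝ) * Complex.I, ((ρ 1 1).re : ℂ)] := by
      ext i j
      fin_cases i <;> fin_cases j
      · exact h00
      · exact h01
      · exact h10
      · exact h11
    have hpq : (ρ 0 0).re + (ρ 1 1).re = 1 := by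
      have h := congrArg Complex.re htr
      rwa [Matrix.trace_fin_two, Complex.add_re, Complex.one_re] at h
    rw [Complex.re_sum, hOtr, ← Finset.sum_sub_distrib]
    refine Finset.sum_congr rfl fun μ _ => ?_
    conv_lhs => rw [hAexp μ, hρ]
    exact pauli_core _ _ _ _ _ _ _ _ hpq
  -- quadratic form
  have quad : ∀ r : Fin 3 → ℝ,
      ∑ μ, (a μ 0 * r 0 + a μ 1 * r 1 + a μ 2 * r 2)^2 = r ⬝ᵥ O.mulVec r := by
    intro r
    simp only [dotProduct, Matrix.mulVec, Fin.sum_univ_three, hO,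
      Finset.sum_mul, Finset.mul_sum, ← Finset.sum_add_distrib]
    exact Finset.sum_congr rfl fun μ _ => by ring
  -- symmetry of O
  have hsymm : O.IsHermitian := by
    rw [Matrix.IsHermitian]
    ext i j
    simp [Matrix.conjTranspose_apply, hO, mul_comm]
  -- lmax eigenvector
  obtain ⟨v, hv0, hvO⟩ : ∃ v ≠ 0, O.mulVec v = lmax • v := by
    have h := hlmax.1
    rw [spectrum.mem_iff, Matrix.isUnit_iff_isUnit_det, isUnit_iff_ne_zero, not_not,
      ← Matrix.exists_mulVec_eq_zero_iff] at h
    obtain ⟨v, hv, h0⟩ := h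
    refine ⟨v, hv, ?_⟩
    rw [Algebra.algebraMap_eq_smul_one, Matrix.sub_mulVec, Matrix.smul_mulVec,
      Matrix.one_mulVec, sub_eq_zero] at h0
    exact h0.symm
  -- normalized eigenvector
  have hvv : 0 < v ⬝ᵥ v := by
    obtain ⟨i, hi⟩ := Function.ne_iff.mp hv0
    have hi' : v i ≠ 0 := by simpa using hi
    refine Finset.sum_pos' (fun j _ => mul_self_nonneg _)
      ⟨i, Finset.mem_univ i, mul_self_pos.mpr hi'⟩
  set n : ℝ := Real.sqrt (v ⬝ᵥ v) with hn
  have hnpos : 0 < n := Real.sqrt_pos.mpr hvv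
  set w : Fin 3 → ℝ := n⁻¹ • v with hw
  have hww : w ⬝ᵥ w = 1 := by
    rw [hw, smul_dotProduct, dotProduct_smul, smul_smul, smul_eq_mul]
    rw [show v ⬝ᵥ v = n * n from (Real.mul_self_sqrt hvv.le).symm]
    field_simp
  have hwO : O.mulVec w = lmax • w := by
    rw [hw, Matrix.mulVec_smul, hvO, smul_comm]
  have hwOw : w ⬝ᵥ O.mulVec w = lmax := by
    rw [hwO, dotProduct_smul, smul_eq_mul, hww, mul_one]
  -- lmax nonneg
  have hlnn : 0 ≤ lmax := by
    rw [← hwOw, ← quad w]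
    exact Finset.sum_nonneg fun μ _ => sq_nonneg _
  -- M = lmax • 1 - O is PSD
  have hMherm : (lmax • (1 : Matrix (Fin 3) (Fin 3) ℝ) - O).IsHermitian := by
    have h1 : (lmax • (1 : Matrix (Fin 3) (Fin 3) ℝ)).IsHermitian := by
      rw [Matrix.IsHermitian]
      ext i j
      simp [Matrix.conjTranspose_apply, Matrix.one_apply, eq_comm]
    exact h1.sub hsymm
  have hMpsd : (lmax • (1 : Matrix (Fin 3) (Fin 3) ℝ) - O).PosSemidef := by
    refine hMherm.posSemidef_iff_eigenvalues_nonneg.mpr fun i => ?_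
    have h1 := hMherm.eigenvalues_mem_spectrum_real i
    set t := hMherm.eigenvalues i
    have h2 : lmax - t ∈ spectrum ℝ O := by
      rw [spectrum.mem_iff] at h1 ⊢
      intro hu
      apply h1
      have heq : algebraMap ℝ (Matrix (Fin 3) (Fin 3) ℝ) t
          - (lmax • 1 - O) = -(algebraMap ℝ (Matrix (Fin 3) (Fin 3) ℝ) (lmax - t) - O) := by
        rw [Algebra.algebraMap_eq_smul_one, Algebra.algebraMap_eq_smul_one, sub_smul]
        abel
      rw [heq, IsUnit.neg_iff]
      exact hu
    have := hlmax.2 h2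
    rw [Pi.zero_apply]
    linarith
  -- bound: for any r with |r|² ≤ 1, r ⬝ᵥ O.mulVec r ≤ lmax
  have bound : ∀ r : Fin 3 → ℝ, r 0^2 + r 1^2 + r 2^2 ≤ 1 → r ⬝ᵥ O.mulVec r ≤ lmax := by
    intro r hr
    have h := hMpsd.dotProduct_mulVec_nonneg r
    rw [star_trivial, Matrix.sub_mulVec, Matrix.smul_mulVec, Matrix.one_mulVec,
      dotProduct_sub, dotProduct_smul, smul_eq_mul] at h
    have hrr : r ⬝ᵥ r = r 0^2 + r 1^2 + r 2^2 := by
      simp [dotProduct, Fin.sum_univ_three, pow_two]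
    have : r ⬝ᵥ O.mulVec r ≤ lmax * (r ⬝ᵥ r) := by linarith
    calc r ⬝ᵥ O.mulVec r ≤ lmax * (r ⬝ᵥ r) := this
      _ ≤ lmax * 1 := by
          apply mul_le_mul_of_nonneg_left _ hlnn
          rw [hrr]; exact hr
      _ = lmax := mul_one _
  have hw2 : w 0^2 + w 1^2 + w 2^2 = 1 := by
    rw [← hww]; simp [dotProduct, Fin.sum_univ_three]; ring
  clear_value w
  constructor
  · -- membership
    set ρv : Matrix (Fin 2) (Fin 2) ℂ :=
      !![(((1 + w 2)/2 : ℝ) : ℂ), (((w 0)/2 : ℝ) : ℂ) - (((w 1)/2 : ℝ) : ℂ) * Complex.I;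
         (((w 0)/2 : ℝ) : ℂ) + (((w 1)/2 : ℝ) : ℂ) * Complex.I, (((1 - w 2)/2 : ℝ) : ℂ)] with hρv
    have hw2C : ((w 0 : ℂ))^2 + ((w 1 : ℂ))^2 + ((w 2 : ℂ))^2 = 1 := by
      exact_mod_cast congrArg (Complex.ofReal) hw2
    have hherm : ρv.conjTranspose = ρv := by
      ext i j
      fin_cases i <;> fin_cases j <;>
        simp [hρv, Matrix.conjTranspose_apply, Complex.ext_iff]
    have hproj : ρv * ρv = ρv := by
      rw [hρv, Matrix.mul_fin_two, ← Matrix.ext_iff]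
      simp only [Fin.forall_fin_two, Matrix.cons_val_zero, Matrix.cons_val_one, Matrix.head_cons,
        Matrix.of_apply, Matrix.cons_val', Matrix.empty_val', Matrix.cons_val_fin_one,
        Matrix.head_fin_const]
      refine ⟨⟨?_, ?_⟩, ?_, ?_⟩
      · push_cast
        linear_combination (1/4 : ℂ) * hw2C - (((w 1 : ℂ))^2/4) * Complex.I_sq
      · push_cast; ring
      · push_cast; ring
      · push_cast
        linear_combination (1/4 : ℂ) * hw2C - (((w 1 : ℂ))^2/4) * Complex.I_sq
    have hpsd : ρv.PosSemidef := by
      have : ρv = ρv * ρv.conjTranspose := by rw [hherm, hproj]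
      rw [this]
      exact Matrix.posSemidef_self_mul_conjTranspose ρv
    have htr : ρv.trace = 1 := by
      rw [hρv, Matrix.trace_fin_two_of]
      push_cast
      ring
    refine ⟨ρv, hpsd, htr, ?_⟩
    rw [key ρv hpsd.1 htr]
    have e01re : (ρv 0 1).re = (w 0)/2 := by simp [hρv]
    have e01im : (ρv 0 1).im = -((w 1)/2) := by simp [hρv]
    have e00re : (ρv 0 0).re = (1 + w 2)/2 := by simp [hρv]
    have e11re : (ρv 1 1).re = (1 - w 2)/2 := by simp [hρv]
    rw [e01re, e01im, e00re, e11re]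
    have : ∑ μ, (a μ 0 * (2*((w 0)/2)) + a μ 1 * (-2* -((w 1)/2))
        + a μ 2 * ((1 + w 2)/2 - (1 - w 2)/2))^2 = lmax := by
      rw [← hwOw, ← quad w]
      exact Finset.sum_congr rfl fun μ _ => by ring
    rw [← this]
  · -- lower bound
    rintro z ⟨ρ, hpsd, htr, rfl⟩
    rw [key ρ hpsd.1 htr]
    set r : Fin 3 → ℝ := ![2*(ρ 0 1).re, -2*(ρ 0 1).im, (ρ 0 0).re - (ρ 1 1).re] with hrdef
    have hr0 : r 0 = 2*(ρ 0 1).re := rfl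
    have hr1 : r 1 = -2*(ρ 0 1).im := rfl
    have hr2 : r 2 = (ρ 0 0).re - (ρ 1 1).re := rfl
    have hre : ∑ μ, (a μ 0 * (2*(ρ 0 1).re) + a μ 1 * (-2*(ρ 0 1).im)
          + a μ 2 * ((ρ 0 0).re - (ρ 1 1).re))^2 = r ⬝ᵥ O.mulVec r := by
      rw [← quad r, hr0, hr1, hr2]
    rw [hre]
    have hherm := hpsd.1
    -- |r|² ≤ 1 from det ≥ 0
    have hdet : 0 ≤ (ρ.det).re := by
      have hd : ρ.det = ((∏ i, hherm.eigenvalues i : ℝ) : ℂ) := by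
        rw [hherm.det_eq_prod_eigenvalues]
        push_cast
        rfl
      rw [hd, Complex.ofReal_re]
      exact Finset.prod_nonneg fun i _ => hpsd.eigenvalues_nonneg i
    rw [Matrix.det_fin_two] at hdet
    have hpq : (ρ 0 0).re + (ρ 1 1).re = 1 := by
      have h := congrArg Complex.re htr
      rwa [Matrix.trace_fin_two, Complex.add_re, Complex.one_re] at h
    have h00 : ρ 0 0 = ((ρ 0 0).re : ℂ) := (hherm.coe_re_apply_self 0).symm
    have h11 : ρ 1 1 = ((ρ 1 1).re : ℂ) := (hherm.coe_re_apply_self 1).symm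
    have h10 : ρ 1 0 = ((ρ 0 1).re : ℂ) - ((ρ 0 1).im : ℝ) * Complex.I := by
      rw [← hherm.apply 1 0]
      simp [Complex.ext_iff]
    have h01 : ρ 0 1 = ((ρ 0 1).re : ℂ) + ((ρ 0 1).im : ℝ) * Complex.I :=
      (Complex.re_add_im _).symm
    rw [h00, h11] at hdet
    conv at hdet => rw [h01, h10]
    have hdet' : 0 ≤ (ρ 0 0).re * (ρ 1 1).re - ((ρ 0 1).re^2 + (ρ 0 1).im^2) := by
      convert hdet using 1
      simp [Complex.sub_re, Complex.mul_re]
      ring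
    have hle : r 0^2 + r 1^2 + r 2^2 ≤ 1 := by
      rw [hr0, hr1, hr2]
      nlinarith [hdet', hpq]
    have := bound r hle
    linarith
end

section
/- Let ρ be a 3×3 complex Hermitian matrix with Tr(ρ) = 1. Then ρ is positive semidefinite if and only if Tr(ρ²) ≤ 1 and det(ρ) ≥ 0 (the determinant of a Hermitian matrix being real). -/
lemma key_real (a b c : ℝ) (hsum : a + b + c = 1) (hsq : a^2 + b^2 + c^2 ≤ 1)
    (hp : 0 ≤ a * b * c) : 0 ≤ a ∧ 0 ≤ b ∧ 0 ≤ c := by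
  have he2 : 0 ≤ a*b + a*c + b*c := by nlinarith [sq_nonneg (a+b+c)]
  refine ⟨?_, ?_, ?_⟩ <;> by_contra h <;> push_neg at h
  · nlinarith [sq_nonneg a, mul_nonneg he2 (neg_nonneg.mpr h.le), sq_nonneg (b - c), sq_nonneg (b + c)]
  · nlinarith [sq_nonneg b, mul_nonneg he2 (neg_nonneg.mpr h.le), sq_nonneg (a - c), sq_nonneg (a + c)]
  · nlinarith [sq_nonneg c, mul_nonneg he2 (neg_nonneg.mpr h.le), sq_nonneg (a - b), sq_nonneg (a + b)]

open ComplexOrder in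
theorem stmt_14 (ρ : Matrix (Fin 3) (Fin 3) ℂ)
    (hherm : ρ.IsHermitian) (htr : ρ.trace = 1) :
    ρ.PosSemidef ↔ ((ρ ^ 2).trace ≤ 1 ∧ 0 ≤ ρ.det) := by
  have e := hherm.eigenvalues
  have hUU : star (hherm.eigenvectorUnitary : Matrix (Fin 3) (Fin 3) ℂ) *
      (hherm.eigenvectorUnitary : Matrix (Fin 3) (Fin 3) ℂ) = 1 :=
    (Unitary.mem_iff.mp hherm.eigenvectorUnitary.2).1
  have hspec := hherm.spectral_theorem
  have key : ∀ (A : Matrix (Fin 3) (Fin 3) ℂ),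
      ((hherm.eigenvectorUnitary : Matrix (Fin 3) (Fin 3) ℂ) * A *
        star (hherm.eigenvectorUnitary : Matrix (Fin 3) (Fin 3) ℂ)).trace = A.trace := by
    intro A
    rw [Matrix.trace_mul_cycle, hUU, Matrix.one_mul]
  have htr1 : ρ.trace = ∑ i, (hherm.eigenvalues i : ℂ) := by
    conv_lhs => rw [hspec]
    rw [Unitary.conjStarAlgAut_apply, key, Matrix.trace_diagonal]
    rfl
  have h2 : ρ ^ 2 = (hherm.eigenvectorUnitary : Matrix (Fin 3) (Fin 3) ℂ) *
      (Matrix.diagonal (RCLike.ofReal ∘ hherm.eigenvalues) *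
        Matrix.diagonal (RCLike.ofReal ∘ hherm.eigenvalues)) *
      star (hherm.eigenvectorUnitary : Matrix (Fin 3) (Fin 3) ℂ) := by
    rw [pow_two]
    conv_lhs => rw [hspec]
    simp only [Unitary.conjStarAlgAut_apply, Unitary.coe_star, Matrix.mul_assoc]
    rw [← Matrix.mul_assoc (star (hherm.eigenvectorUnitary : Matrix (Fin 3) (Fin 3) ℂ))
      (hherm.eigenvectorUnitary : Matrix (Fin 3) (Fin 3) ℂ), hUU, Matrix.one_mul]
  have hsq : (ρ ^ 2).trace = ∑ i, ((hherm.eigenvalues i : ℂ))^2 := by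
    rw [h2, key, Matrix.diagonal_mul_diagonal, Matrix.trace_diagonal]
    simp [pow_two]
  have hdet : ρ.det = ∏ i, (hherm.eigenvalues i : ℂ) := hherm.det_eq_prod_eigenvalues
  have hesum : hherm.eigenvalues 0 + hherm.eigenvalues 1 + hherm.eigenvalues 2 = 1 := by
    have : ((hherm.eigenvalues 0 + hherm.eigenvalues 1 + hherm.eigenvalues 2 : ℝ) : ℂ) = 1 := by
      rw [← htr, htr1, Fin.sum_univ_three]; push_cast; ring
    exact_mod_cast this
  constructor
  · intro hpsd
    have hnn : ∀ i, 0 ≤ hherm.eigenvalues i := fun i => hpsd.eigenvalues_nonneg i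
    constructor
    · rw [hsq, Fin.sum_univ_three]
      have : (((hherm.eigenvalues 0)^2 + (hherm.eigenvalues 1)^2 + (hherm.eigenvalues 2)^2 : ℝ) : ℂ)
          ≤ ((1:ℝ):ℂ) := by
        rw [Complex.real_le_real]
        nlinarith [hnn 0, hnn 1, hnn 2]
      push_cast at this ⊢
      convert this using 2 <;> push_cast <;> ring
    · rw [hdet, Fin.prod_univ_three]
      have : ((0:ℝ):ℂ) ≤ ((hherm.eigenvalues 0 * hherm.eigenvalues 1 * hherm.eigenvalues 2 : ℝ) : ℂ) := by
        rw [Complex.real_le_real]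
        exact mul_nonneg (mul_nonneg (hnn 0) (hnn 1)) (hnn 2)
      push_cast at this
      convert this using 1
  · rintro ⟨h1, h2'⟩
    have hsqr : (hherm.eigenvalues 0)^2 + (hherm.eigenvalues 1)^2 + (hherm.eigenvalues 2)^2 ≤ 1 := by
      have : (((hherm.eigenvalues 0)^2 + (hherm.eigenvalues 1)^2 + (hherm.eigenvalues 2)^2 : ℝ) : ℂ)
          ≤ ((1:ℝ):ℂ) := by
        rw [hsq, Fin.sum_univ_three] at h1
        push_cast
        convert h1 using 2 <;> push_cast <;> ring
      exact_mod_cast (Complex.real_le_real.mp this)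
    have hdetr : 0 ≤ hherm.eigenvalues 0 * hherm.eigenvalues 1 * hherm.eigenvalues 2 := by
      have : ((0:ℝ):ℂ) ≤ ((hherm.eigenvalues 0 * hherm.eigenvalues 1 * hherm.eigenvalues 2 : ℝ) : ℂ) := by
        rw [hdet, Fin.prod_univ_three] at h2'
        push_cast
        convert h2' using 1
      exact_mod_cast (Complex.real_le_real.mp this)
    have hk := key_real _ _ _ hesum hsqr hdetr
    exact hherm.posSemidef_iff_eigenvalues_nonneg.mpr (fun i => by
      fin_cases i <;> simp [hk.1, hk.2.1, hk.2.2])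
end

section
/- Let G₁,…,G₈ be the Gell-Mann matrices, and for x, y ∈ ℝ⁸ let the star product be (x⋆y)_k = √3·∑_{i,j=1}^{8} d_{ijk} x_i y_j with d_{ijk} = (1/4)·Re Tr((G_iG_j + G_jG_i)G_k). For r ∈ ℝ⁸ set ρ(r) = (1/3)(I + √3·∑_{k=1}^{8} r_k G_k). Then Tr(ρ(r)²) = (1 + 2‖r‖²)/3 and det(ρ(r)) = (1 + 2⟨r, r⋆r⟩ − 3⟨r, r⟩)/27, where ⟨·,·⟩ and ‖·‖ are the Euclidean inner product and norm on ℝ⁸. -/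
noncomputable def gellMann : Fin 8 → Matrix (Fin 3) (Fin 3) ℂ :=
  ![!![0, 1, 0; 1, 0, 0; 0, 0, 0],
    !![0, -Complex.I, 0; Complex.I, 0, 0; 0, 0, 0],
    !![1, 0, 0; 0, -1, 0; 0, 0, 0],
    !![0, 0, 1; 0, 0, 0; 1, 0, 0],
    !![0, 0, -Complex.I; 0, 0, 0; Complex.I, 0, 0],
    !![0, 0, 0; 0, 0, 1; 0, 1, 0],
    !![0, 0, 0; 0, 0, -Complex.I; 0, Complex.I, 0],
    !![((Real.sqrt 3 : ℝ) : ℂ)⁻¹, 0, 0; 0, ((Real.sqrt 3 : ℝ) : ℂ)⁻¹, 0;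
       0, 0, -2 * ((Real.sqrt 3 : ℝ) : ℂ)⁻¹]]

noncomputable def dGM (i j k : Fin 8) : ℝ :=
  (1 / 4) * ((gellMann i * gellMann j + gellMann j * gellMann i) * gellMann k).trace.re

noncomputable def starGM (x y : Fin 8 → ℝ) : Fin 8 → ℝ :=
  fun k => Real.sqrt 3 * ∑ i, ∑ j, dGM i j k * x i * y j

section helpers
variable {α : Type*} (a₀ a₁ a₂ a₃ a₄ a₅ a₆ a₇ : α)
lemma vec8_5 : ![a₀,a₁,a₂,a₃,a₄,a₅,a₆,a₇] 5 = a₅ := rfl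
lemma vec8_6 : ![a₀,a₁,a₂,a₃,a₄,a₅,a₆,a₇] 6 = a₆ := rfl
lemma vec8_7 : ![a₀,a₁,a₂,a₃,a₄,a₅,a₆,a₇] 7 = a₇ := rfl
end helpers

lemma lin3GM (c : Fin 8 → ℝ) (A : Fin 8 → Matrix (Fin 3) (Fin 3) ℂ) (P Q : Matrix (Fin 3) (Fin 3) ℂ) :
    ∑ j, c j * ((P * A j * Q).trace.re) = ((P * (∑ j, (c j : ℂ) • A j) * Q).trace).re := by
  simp [Matrix.mul_sum, Matrix.sum_mul, Matrix.mul_smul, Matrix.smul_mul, Matrix.trace_sum,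
    Matrix.trace_smul, Complex.re_sum, smul_eq_mul, Complex.re_ofReal_mul]

lemma lin2GM (c : Fin 8 → ℝ) (A : Fin 8 → Matrix (Fin 3) (Fin 3) ℂ) (B : Matrix (Fin 3) (Fin 3) ℂ) :
    ∑ i, c i * ((A i * B).trace.re) = (((∑ i, (c i : ℂ) • A i) * B).trace).re := by
  simp [Matrix.sum_mul, Matrix.smul_mul, Matrix.trace_sum,
    Matrix.trace_smul, Complex.re_sum, smul_eq_mul, Complex.re_ofReal_mul]

lemma lin2GM' (c : Fin 8 → ℝ) (A : Fin 8 → Matrix (Fin 3) (Fin 3) ℂ) (B : Matrix (Fin 3) (Fin 3) ℂ) :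
    ∑ i, c i * ((B * A i).trace.re) = ((B * (∑ i, (c i : ℂ) • A i)).trace).re := by
  simp [Matrix.mul_sum, Matrix.mul_smul, Matrix.trace_sum,
    Matrix.trace_smul, Complex.re_sum, smul_eq_mul, Complex.re_ofReal_mul]

noncomputable def MsumGM (r : Fin 8 → ℝ) : Matrix (Fin 3) (Fin 3) ℂ := ∑ i, (r i : ℂ) • gellMann i

lemma keyGM (r : Fin 8 → ℝ) :
    ∑ k, r k * starGM r r k
      = Real.sqrt 3 / 2 * ((MsumGM r * MsumGM r * MsumGM r).trace.re) := by
  have hT1 : ∀ k, ∑ i, ∑ j, (r i * r j) * ((gellMann i * gellMann j * gellMann k).trace.re)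
      = ((MsumGM r * MsumGM r * gellMann k).trace.re) := by
    intro k
    have inner : ∀ i, ∑ j, (r i * r j) * ((gellMann i * gellMann j * gellMann k).trace.re)
        = r i * ((gellMann i * MsumGM r * gellMann k).trace.re) := by
      intro i
      rw [MsumGM, ← lin3GM r gellMann (gellMann i) (gellMann k), Finset.mul_sum]
      exact Finset.sum_congr rfl fun j _ => by ring
    simp only [inner]
    calc ∑ i, r i * ((gellMann i * MsumGM r * gellMann k).trace.re)
        = ∑ i, r i * ((gellMann i * (MsumGM r * gellMann k)).trace.re) := by
          simp only [mul_assoc]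
      _ = ((MsumGM r * (MsumGM r * gellMann k)).trace).re := by rw [lin2GM r gellMann]; rfl
      _ = _ := by rw [← mul_assoc]
  have hstep : ∀ k, ∑ i, ∑ j, dGM i j k * r i * r j
      = 1 / 2 * ((MsumGM r * MsumGM r * gellMann k).trace.re) := by
    intro k
    have e1 : ∀ i j, dGM i j k * r i * r j
        = 1/4 * ((r i * r j) * ((gellMann i * gellMann j * gellMann k).trace.re))
          + 1/4 * ((r i * r j) * ((gellMann j * gellMann i * gellMann k).trace.re)) := by
      intro i j
      rw [dGM, Matrix.add_mul, Matrix.trace_add, Complex.add_re]; ring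
    simp only [e1, Finset.sum_add_distrib, ← Finset.mul_sum]
    rw [Finset.sum_comm (f := fun i j => (r i * r j) * ((gellMann j * gellMann i * gellMann k).trace.re))]
    have : ∑ j, ∑ i, (r i * r j) * ((gellMann j * gellMann i * gellMann k).trace.re)
        = ∑ j, ∑ i, (r j * r i) * ((gellMann j * gellMann i * gellMann k).trace.re) := by
      exact Finset.sum_congr rfl fun j _ => Finset.sum_congr rfl fun i _ => by ring
    rw [this, hT1 k]; ring
  calc ∑ k, r k * starGM r r k
      = ∑ k, r k * ((Real.sqrt 3 / 2) * ((MsumGM r * MsumGM r * gellMann k).trace.re)) := by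
        refine Finset.sum_congr rfl fun k _ => ?_
        rw [starGM, hstep k]; ring
    _ = Real.sqrt 3 / 2 * ∑ k, r k * ((MsumGM r * MsumGM r * gellMann k).trace.re) := by
        rw [Finset.mul_sum]; exact Finset.sum_congr rfl fun k _ => by ring
    _ = _ := by rw [lin2GM' r gellMann (MsumGM r * MsumGM r), MsumGM]

noncomputable abbrev scGM : ℂ := ((Real.sqrt 3 : ℝ) : ℂ)

lemma hscGM : scGM * scGM = 3 := by
  rw [scGM, ← Complex.ofReal_mul, Real.mul_self_sqrt (by norm_num)]; norm_num

lemma hscinvGM : (scGM)⁻¹ = scGM / 3 := by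
  rw [eq_div_iff (by norm_num), ← hscGM]
  field_simp [Complex.ofReal_ne_zero, Real.sqrt_ne_zero']

lemma MexpGM (r : Fin 8 → ℝ) :
    (∑ k, (r k : ℂ) • gellMann k) =
    !![(r 2 : ℂ) + (r 7) * (scGM/3), (r 0) - Complex.I * (r 1), (r 3) - Complex.I * (r 4);
       (r 0) + Complex.I * (r 1), -(r 2 : ℂ) + (r 7) * (scGM/3), (r 5) - Complex.I * (r 6);
       (r 3) + Complex.I * (r 4), (r 5) + Complex.I * (r 6), -2 * (r 7) * (scGM/3)] := by
  ext i j
  fin_cases i <;> fin_cases j <;>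
    simp [gellMann, Fin.sum_univ_eight, Matrix.sum_apply, vec8_5, vec8_6, vec8_7,
      Matrix.vecHead, Matrix.vecTail, hscinvGM] <;> ring

set_option maxHeartbeats 2000000 in
theorem stmt_15 (r : Fin 8 → ℝ) (ρ : Matrix (Fin 3) (Fin 3) ℂ)
    (hρ : ρ = ((1 : ℂ) / 3)
      • ((1 : Matrix (Fin 3) (Fin 3) ℂ)
          + ((Real.sqrt 3 : ℝ) : ℂ) • ∑ k, (r k : ℂ) • gellMann k)) :
    (ρ ^ 2).trace = (((1 + 2 * ∑ k, (r k) ^ 2) / 3 : ℝ) : ℂ)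
    ∧ ρ.det = (((1 + 2 * (∑ k, r k * starGM r r k) - 3 * ∑ k, r k * r k) / 27 : ℝ) : ℂ) := by
  have hρE : ρ = !![((1:ℂ) + scGM*((r 2) + (r 7) * (scGM/3)))/3, scGM*((r 0) - Complex.I * (r 1))/3, scGM*((r 3) - Complex.I * (r 4))/3;
       scGM*((r 0) + Complex.I * (r 1))/3, ((1:ℂ) + scGM*(-(r 2 : ℂ) + (r 7) * (scGM/3)))/3, scGM*((r 5) - Complex.I * (r 6))/3;
       scGM*((r 3) + Complex.I * (r 4))/3, scGM*((r 5) + Complex.I * (r 6))/3, ((1:ℂ) + scGM*(-2 * (r 7) * (scGM/3)))/3] := by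
    rw [hρ, MexpGM]
    ext i j
    fin_cases i <;> fin_cases j <;>
      simp [Matrix.one_apply, Matrix.add_apply, Matrix.smul_apply] <;> ring
  have h2 : Real.sqrt 3 ^ 2 = 3 := Real.sq_sqrt (by norm_num)
  have h4 : Real.sqrt 3 ^ 4 = 9 := by
    rw [show (4:ℕ) = 2*2 from rfl, pow_mul, h2]; norm_num
  have h3p : Real.sqrt 3 ^ 3 = 3 * Real.sqrt 3 := by rw [pow_succ, h2]
  have h5 : Real.sqrt 3 ^ 5 = 9 * Real.sqrt 3 := by rw [pow_succ, h4]
  have h6 : Real.sqrt 3 ^ 6 = 27 := by rw [pow_succ, h5]; nlinarith [h2]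
  constructor
  · rw [pow_two, hρE, Fin.sum_univ_eight]
    simp only [Matrix.mul_fin_three, Matrix.trace_fin_three_of]
    apply Complex.ext <;>
      simp [Complex.div_re, Complex.div_im, Complex.normSq, ← Complex.ofReal_pow] <;>
      ring_nf <;>
      simp [h2, h4, h3p] <;> ring_nf
  · rw [keyGM, MsumGM, MexpGM, hρE, Matrix.det_fin_three, Fin.sum_univ_eight]
    simp only [Matrix.mul_fin_three, Matrix.trace_fin_three_of]
    apply Complex.ext <;>
      simp [Complex.div_re, Complex.div_im, Complex.normSq, ← Complex.ofReal_pow,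
        Matrix.cons_val_zero, Matrix.cons_val_one, Matrix.head_cons] <;>
      ring_nf <;>
      simp [h2, h4, h3p, h5, h6] <;> ring_nf
end

section
/- Let L_x = (1/√2)·[[0,1,0],[1,0,1],[0,1,0]], L_y = (1/√2)·[[0,−i,0],[i,0,−i],[0,i,0]], and L_z = [[1,0,0],[0,0,0],[0,0,−1]] be the spin-1 angular momentum operators on ℂ³. Then the minimum over all 3×3 density matrices ρ of var_ρ(L_x) + var_ρ(L_y) + var_ρ(L_z) equals 1: for every density matrix ρ, var_ρ(L_x) + var_ρ(L_y) + var_ρ(L_z) ≥ 1, and equality is attained for some density matrix. -/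
open Matrix ComplexOrder in
private lemma cs18 (ρ : Matrix (Fin 3) (Fin 3) ℂ) (h : ρ.PosSemidef) (i j : Fin 3) :
    ‖ρ i j‖ ^ 2 ≤ (ρ i i).re * (ρ j j).re := by
  obtain ⟨B, rfl⟩ : ∃ B : Matrix (Fin 3) (Fin 3) ℂ, ρ = Bᴴ * B := by
    open scoped MatrixOrder in exact CStarAlgebra.nonneg_iff_eq_star_mul_self.mp h.nonneg
  set u : EuclideanSpace ℂ (Fin 3) := WithLp.toLp 2 (fun k => B k i) with hu
  set v : EuclideanSpace ℂ (Fin 3) := WithLp.toLp 2 (fun k => B k j) with hv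
  have h1 : (Bᴴ * B) i j = (inner ℂ u v : ℂ) := by
    simp [Matrix.mul_apply, Matrix.conjTranspose_apply, inner, u, v, mul_comm]
  have h2 : ((Bᴴ * B) i i).re = ‖u‖ ^ 2 := by
    rw [← @inner_self_eq_norm_sq ℂ]
    simp [Matrix.mul_apply, Matrix.conjTranspose_apply, inner, u, mul_comm]
  have h3 : ((Bᴴ * B) j j).re = ‖v‖ ^ 2 := by
    rw [← @inner_self_eq_norm_sq ℂ]
    simp [Matrix.mul_apply, Matrix.conjTranspose_apply, inner, v, mul_comm]
  rw [h1, h2, h3]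
  have hn := norm_inner_le_norm (𝕜 := ℂ) u v
  calc ‖(inner ℂ u v : ℂ)‖ ^ 2 = ‖(inner ℂ u v : ℂ)‖^2 := rfl
    _ ≤ (‖u‖ * ‖v‖)^2 := by
        have : (0:ℝ) ≤ ‖(inner ℂ u v : ℂ)‖ := norm_nonneg _
        nlinarith
    _ = ‖u‖^2 * ‖v‖^2 := by ring

open Matrix ComplexOrder in
private lemma diag18 (ρ : Matrix (Fin 3) (Fin 3) ℂ) (h : ρ.PosSemidef) (i : Fin 3) :
    ρ i i = ((ρ i i).re : ℂ) ∧ 0 ≤ (ρ i i).re := by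
  obtain ⟨B, rfl⟩ : ∃ B : Matrix (Fin 3) (Fin 3) ℂ, ρ = Bᴴ * B := by
    open scoped MatrixOrder in exact CStarAlgebra.nonneg_iff_eq_star_mul_self.mp h.nonneg
  have hd : (Bᴴ * B) i i = ((Complex.normSq (B 0 i) + Complex.normSq (B 1 i)
      + Complex.normSq (B 2 i) : ℝ) : ℂ) := by
    simp [Matrix.mul_apply, Fin.sum_univ_three, Matrix.conjTranspose_apply,
      ← Complex.normSq_eq_conj_mul_self]
  rw [hd]
  constructor
  · norm_num
  · simp only [Complex.ofReal_re]
    exact add_nonneg (add_nonneg (Complex.normSq_nonneg _) (Complex.normSq_nonneg _))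
      (Complex.normSq_nonneg _)

private lemma real18 (p q r x1 y1 x2 y2 : ℝ) (hp : 0 ≤ p) (hq : 0 ≤ q) (hr : 0 ≤ r)
    (h1 : x1^2 + y1^2 ≤ p*q) (h2 : x2^2 + y2^2 ≤ q*r) (hs : p + q + r = 1) :
    2*(x1+x2)^2 + 2*(y1+y2)^2 + (p-r)^2 ≤ 1 := by
  obtain ⟨a, ha0, ha2⟩ : ∃ a, 0 ≤ a ∧ a^2 = p := ⟨Real.sqrt p, Real.sqrt_nonneg p, Real.sq_sqrt hp⟩
  obtain ⟨b, hb0, hb2⟩ : ∃ b, 0 ≤ b ∧ b^2 = q := ⟨Real.sqrt q, Real.sqrt_nonneg q, Real.sq_sqrt hq⟩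
  obtain ⟨c, hc0, hc2⟩ : ∃ c, 0 ≤ c ∧ c^2 = r := ⟨Real.sqrt r, Real.sqrt_nonneg r, Real.sq_sqrt hr⟩
  subst ha2 hb2 hc2
  have hu2 : (x1*x2 + y1*y2)^2 ≤ ((a*b)*(b*c))^2 := by
    have hm : (x1^2+y1^2) * (x2^2+y2^2) ≤ ((a*b)^2) * ((b*c)^2) := by
      have := mul_le_mul h1 h2 (by positivity) (by nlinarith [sq_nonneg x1, sq_nonneg y1])
      nlinarith [this]
    nlinarith [sq_nonneg (x1*y2 - x2*y1), hm]
  have hv0 : 0 ≤ (a*b)*(b*c) := by positivity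
  have hu : x1*x2 + y1*y2 ≤ (a*b)*(b*c) := by nlinarith [hu2, hv0]
  have step1 : (x1+x2)^2 + (y1+y2)^2 ≤ (a*b + b*c)^2 := by nlinarith [h1, h2, hu]
  nlinarith [step1, sq_nonneg (1 - (a+c)^2), sq_nonneg (a+c), sq_nonneg (a-c), hb0, sq_nonneg b]

open ComplexOrder in
theorem stmt_18 (Lx Ly Lz : Matrix (Fin 3) (Fin 3) ℂ)
    (hLx : Lx = ((Real.sqrt 2 : ℝ) : ℂ)⁻¹ • !![0, 1, 0; 1, 0, 1; 0, 1, 0])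
    (hLy : Ly = ((Real.sqrt 2 : ℝ) : ℂ)⁻¹
        • !![0, -Complex.I, 0; Complex.I, 0, -Complex.I; 0, Complex.I, 0])
    (hLz : Lz = !![1, 0, 0; 0, 0, 0; 0, 0, -1]) :
    IsLeast {x : ℝ | ∃ ρ : Matrix (Fin 3) (Fin 3) ℂ,
        ρ.PosSemidef ∧ ρ.trace = 1 ∧
        x = (((Lx ^ 2 * ρ).trace - ((Lx * ρ).trace) ^ 2)
              + ((Ly ^ 2 * ρ).trace - ((Ly * ρ).trace) ^ 2)
              + ((Lz ^ 2 * ρ).trace - ((Lz * ρ).trace) ^ 2)).re}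
      1 := by
  subst hLx hLy hLz
  constructor
  · -- membership
    refine ⟨Matrix.diagonal ![1,0,0], ?_, ?_, ?_⟩
    · rw [Matrix.posSemidef_diagonal_iff]
      intro i; fin_cases i <;> norm_num
    · norm_num [Matrix.trace_diagonal, Fin.sum_univ_three, Matrix.cons_val_two]
    · have hs : (((Real.sqrt 2:ℝ):ℂ))⁻¹ * ((Real.sqrt 2:ℝ):ℂ)⁻¹ = (2:ℂ)⁻¹ := by
        rw [← mul_inv]
        have : ((Real.sqrt 2:ℝ):ℂ) * ((Real.sqrt 2:ℝ):ℂ) = 2 := by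
          norm_cast
          exact_mod_cast Real.mul_self_sqrt (by norm_num)
        rw [this]
      simp [Matrix.trace, Matrix.diag, Matrix.mul_apply, Fin.sum_univ_three, pow_two,
        Matrix.smul_apply, Matrix.diagonal, Complex.ext_iff]
      have h2 : Real.sqrt 2 * Real.sqrt 2 = 2 := Real.mul_self_sqrt (by norm_num)
      nlinarith
  · rintro x ⟨ρ, hPSD, htr, rfl⟩
    have hH := hPSD.1
    have e10 : ρ 1 0 = (starRingEnd ℂ) (ρ 0 1) := (hH.apply 1 0).symm
    have e21 : ρ 2 1 = (starRingEnd ℂ) (ρ 1 2) := (hH.apply 2 1).symm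
    have e20 : ρ 2 0 = (starRingEnd ℂ) (ρ 0 2) := (hH.apply 2 0).symm
    obtain ⟨d0, hp⟩ := diag18 ρ hPSD 0
    obtain ⟨d1, hq⟩ := diag18 ρ hPSD 1
    obtain ⟨d2, hr⟩ := diag18 ρ hPSD 2
    have hsum : (ρ 0 0).re + (ρ 1 1).re + (ρ 2 2).re = 1 := by
      have h := congrArg Complex.re htr
      simp [Matrix.trace, Matrix.diag, Fin.sum_univ_three] at h
      exact h
    have hc1 : (ρ 0 1).re^2 + (ρ 0 1).im^2 ≤ (ρ 0 0).re * (ρ 1 1).re := by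
      have h := cs18 ρ hPSD 0 1
      rw [Complex.sq_norm, Complex.normSq_apply] at h
      nlinarith [h]
    have hc2 : (ρ 1 2).re^2 + (ρ 1 2).im^2 ≤ (ρ 1 1).re * (ρ 2 2).re := by
      have h := cs18 ρ hPSD 1 2
      rw [Complex.sq_norm, Complex.normSq_apply] at h
      nlinarith [h]
    have key := real18 ((ρ 0 0).re) ((ρ 1 1).re) ((ρ 2 2).re)
      ((ρ 0 1).re) ((ρ 0 1).im) ((ρ 1 2).re) ((ρ 1 2).im) hp hq hr hc1 hc2 hsum
    -- now compute the expression
    have hs2 : (((Real.sqrt 2:ℝ):ℂ))⁻¹ ^ 2 = (2:ℂ)⁻¹ := by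
      rw [pow_two, ← mul_inv]
      have : ((Real.sqrt 2:ℝ):ℂ) * ((Real.sqrt 2:ℝ):ℂ) = 2 := by
        norm_cast
        exact_mod_cast Real.mul_self_sqrt (by norm_num)
      rw [this]
    have hx2 : ((((Real.sqrt 2 : ℝ) : ℂ)⁻¹ • !![0, 1, 0; 1, 0, 1; 0, 1, 0]) : Matrix (Fin 3) (Fin 3) ℂ) ^ 2
        = (2:ℂ)⁻¹ • (!![0, 1, 0; 1, 0, 1; 0, 1, 0] * !![0, 1, 0; 1, 0, 1; 0, 1, 0]) := by
      rw [smul_pow, hs2, pow_two]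
    have hy2 : ((((Real.sqrt 2 : ℝ) : ℂ)⁻¹ • !![0, -Complex.I, 0; Complex.I, 0, -Complex.I; 0, Complex.I, 0]) : Matrix (Fin 3) (Fin 3) ℂ) ^ 2
        = (2:ℂ)⁻¹ • (!![0, -Complex.I, 0; Complex.I, 0, -Complex.I; 0, Complex.I, 0] * !![0, -Complex.I, 0; Complex.I, 0, -Complex.I; 0, Complex.I, 0]) := by
      rw [smul_pow, hs2, pow_two]
    have hTx : (((((Real.sqrt 2 : ℝ) : ℂ)⁻¹ • !![0, 1, 0; 1, 0, 1; 0, 1, 0]) * ρ).trace) ^ 2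
        = (2:ℂ)⁻¹ * (ρ 1 0 + ρ 0 1 + ρ 2 1 + ρ 1 2)^2 := by
      have h : ((((Real.sqrt 2 : ℝ) : ℂ)⁻¹ • !![0, 1, 0; 1, 0, 1; 0, 1, 0]) * ρ).trace
          = ((Real.sqrt 2 : ℝ) : ℂ)⁻¹ * (ρ 1 0 + ρ 0 1 + ρ 2 1 + ρ 1 2) := by
        simp [Matrix.trace, Matrix.diag, Matrix.mul_apply, Fin.sum_univ_three,
          Matrix.smul_apply]
        ring
      rw [h, mul_pow, hs2]
    have hTy : (((((Real.sqrt 2 : ℝ) : ℂ)⁻¹ • !![0, -Complex.I, 0; Complex.I, 0, -Complex.I; 0, Complex.I, 0]) * ρ).trace) ^ 2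
        = (2:ℂ)⁻¹ * (Complex.I * (ρ 0 1 - ρ 1 0 + ρ 1 2 - ρ 2 1))^2 := by
      have h : ((((Real.sqrt 2 : ℝ) : ℂ)⁻¹ • !![0, -Complex.I, 0; Complex.I, 0, -Complex.I; 0, Complex.I, 0]) * ρ).trace
          = ((Real.sqrt 2 : ℝ) : ℂ)⁻¹ * (Complex.I * (ρ 0 1 - ρ 1 0 + ρ 1 2 - ρ 2 1)) := by
        simp [Matrix.trace, Matrix.diag, Matrix.mul_apply, Fin.sum_univ_three,
          Matrix.smul_apply]
        ring
      rw [h, mul_pow, hs2]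
    rw [hx2, hy2, hTx, hTy, e10, e21]
    simp only [Matrix.trace, Matrix.diag, Matrix.mul_apply, Fin.sum_univ_three,
      Matrix.smul_apply, Matrix.cons_val', Matrix.cons_val_zero, Matrix.cons_val_one,
      Matrix.head_cons, Matrix.head_fin_const, Matrix.empty_val', Matrix.cons_val_fin_one,
      Matrix.of_apply, Matrix.cons_val_two, Matrix.tail_cons, pow_two]
    rw [e20, d0, d1, d2]
    simp only [Complex.add_re, Complex.sub_re, Complex.mul_re, Complex.mul_im,
      Complex.add_im, Complex.sub_im, Complex.ofReal_re, Complex.ofReal_im,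
      Complex.I_re, Complex.I_im, Complex.conj_re, Complex.conj_im, Complex.neg_re,
      Complex.neg_im, Complex.inv_re, Complex.inv_im, Complex.one_re, Complex.one_im,
      Complex.zero_re, Complex.zero_im, Complex.normSq_apply]
    norm_num
    nlinarith [key]
end
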